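/- arXiv:1302.2230 — 10 statements merged into one kernel-verified Lean document; each statement's English description precedes it below -/
import Mathlib

section
/- A right R-module M is S-pure flat if and only if its Pontryagin dual M⁺ = Hom_ℤ(M, ℚ/ℤ) is an S-pure injective left R-module. -/
open Function LinearMap

universe u

variable {R : Type u}

section Defs
variable [Ring R]

/-- The lifting property defining `S`-purity of an epimorphism `g`. -/
def SPureLift (S : Set (ModuleCat.{u} R)) {B C : Type u} [AddCommGroup B] [Module R B]
    [AddCommGroup C] [Module R C] (g : B →ₗ[R] C) : Prop :=
  ∀ U ∈ S, ∀ h : U →ₗ[R] C, ∃ h' : U →ₗ[R] B, g ∘ₗ h' = h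

/-- `0 → A → B → C → 0` is an `S`-pure exact sequence. -/
def IsSPureExact (S : Set (ModuleCat.{u} R)) {A B C : Type u} [AddCommGroup A] [Module R A]
    [AddCommGroup B] [Module R B] [AddCommGroup C] [Module R C]
    (f : A →ₗ[R] B) (g : B →ₗ[R] C) : Prop :=
  Function.Injective f ∧ Function.Surjective g ∧ Function.Exact f g ∧ SPureLift S g

/-- `E` is `S`-pure injective. -/
def IsSPureInjective (S : Set (ModuleCat.{u} R)) (E : Type u) [AddCommGroup E]
    [Module R E] : Prop :=
  ∀ ⦃A B C : Type u⦄ [AddCommGroup A] [Module R A] [AddCommGroup B] [Module R B]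
    [AddCommGroup C] [Module R C] (f : A →ₗ[R] B) (g : B →ₗ[R] C),
    IsSPureExact S f g → ∀ h : A →ₗ[R] E, ∃ h' : B →ₗ[R] E, h' ∘ₗ f = h

/-- `P` is `S`-pure projective. -/
def IsSPureProjective (S : Set (ModuleCat.{u} R)) (P : Type u) [AddCommGroup P]
    [Module R P] : Prop :=
  ∀ ⦃A B C : Type u⦄ [AddCommGroup A] [Module R A] [AddCommGroup B] [Module R B]
    [AddCommGroup C] [Module R C] (f : A →ₗ[R] B) (g : B →ₗ[R] C),
    IsSPureExact S f g → ∀ h : P →ₗ[R] C, ∃ h' : P →ₗ[R] B, g ∘ₗ h' = h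

/-- `N` is an `S`-pure submodule of `M`. -/
def IsSPureSubmodule (S : Set (ModuleCat.{u} R)) {M : Type u} [AddCommGroup M] [Module R M]
    (N : Submodule R M) : Prop :=
  SPureLift S N.mkQ

/-- `φ` is an `S`-pure monomorphism. -/
def IsSPureMono (S : Set (ModuleCat.{u} R)) {M E : Type u} [AddCommGroup M] [Module R M]
    [AddCommGroup E] [Module R E] (φ : M →ₗ[R] E) : Prop :=
  Function.Injective φ ∧ IsSPureSubmodule S (LinearMap.range φ)

/-- `M` is an `S`-pure essential extension of its submodule `N`. -/
def IsSPureEssentialExtension (S : Set (ModuleCat.{u} R)) {M : Type u} [AddCommGroup M]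
    [Module R M] (N : Submodule R M) : Prop :=
  IsSPureSubmodule S N ∧
    ∀ ⦃L : Type u⦄ [AddCommGroup L] [Module R L] (φ : M →ₗ[R] L),
      IsSPureMono S (φ ∘ₗ N.subtype) → Function.Injective φ

/-- `M` is a maximal `S`-pure essential extension of its submodule `N` : `M` is an
`S`-pure essential extension of `N` and no proper extension of `M` is an `S`-pure essential
extension of (the image of) `N`. -/
def IsMaxSPureEssentialExtension (S : Set (ModuleCat.{u} R)) {M : Type u} [AddCommGroup M]
    [Module R M] (N : Submodule R M) : Prop :=
  IsSPureEssentialExtension S N ∧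
    ∀ ⦃L : Type u⦄ [AddCommGroup L] [Module R L] (ι : M →ₗ[R] L), Function.Injective ι →
      IsSPureEssentialExtension S (LinearMap.range (ι ∘ₗ N.subtype)) → Function.Surjective ι

end Defs

section FlatDefs
variable [CommRing R]

/-- A (right) `R`-module `F` is `S`-pure flat. -/
def IsSPureFlat (S : Set (ModuleCat.{u} R)) (F : Type u) [AddCommGroup F]
    [Module R F] : Prop :=
  ∀ ⦃A B C : Type u⦄ [AddCommGroup A] [Module R A] [AddCommGroup B] [Module R B]
    [AddCommGroup C] [Module R C] (f : A →ₗ[R] B) (g : B →ₗ[R] C),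
    IsSPureExact S f g → Function.Injective (LinearMap.lTensor F f)

end FlatDefs

/-- `M` is `S`-pure flat iff its Pontryagin dual `M⁺ = Hom_ℤ(M, ℚ/ℤ)` is
`S`-pure injective. -/
theorem stmt2 [CommRing R] (S : Set (ModuleCat.{u} R)) (M : Type u) [AddCommGroup M]
    [Module R M] :
    IsSPureFlat S M ↔ IsSPureInjective S (CharacterModule M) := by
  constructor
  · intro hM A B C _ _ _ _ _ _ f g hfg h
    have h1 : Function.Injective (LinearMap.rTensor M f) :=
      (LinearMap.lTensor_inj_iff_rTensor_inj M f).mp (hM f g hfg)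
    have h2 := rTensor_injective_iff_lcomp_surjective.mp h1
    obtain ⟨h', hh'⟩ := h2 h
    exact ⟨h', hh'⟩
  · intro hM A B C _ _ _ _ _ _ f g hfg
    rw [LinearMap.lTensor_inj_iff_rTensor_inj,
      rTensor_injective_iff_lcomp_surjective]
    intro h
    obtain ⟨h', hh'⟩ := hM f g hfg h
    exact ⟨h', hh'⟩
end

section
/- The class of S-pure flat right R-modules is closed under pure quotients: if M is S-pure flat and 0 → N → M → L → 0 is a pure exact sequence of right R-modules, then L is S-pure flat. -/
open Function LinearMap

universe u

variable {R : Type u}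

private theorem stmt3_aux {R : Type u} [CommRing R] {N M L : Type u}
    [AddCommGroup N] [Module R N] [AddCommGroup M] [Module R M] [AddCommGroup L] [Module R L]
    (f : N →ₗ[R] M) (g : M →ₗ[R] L)
    (hfg : Function.Exact f g)
    (hpure : ∀ (D : Type u) [AddCommGroup D] [Module R D],
      Function.Injective (LinearMap.lTensor D f) ∧
      Function.Exact (LinearMap.lTensor D f) (LinearMap.lTensor D g) ∧
      Function.Surjective (LinearMap.lTensor D g))
    {A B C : Type u} [AddCommGroup A] [Module R A] [AddCommGroup B] [Module R B]
    [AddCommGroup C] [Module R C] (f' : A →ₗ[R] B) (g' : B →ₗ[R] C)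
    (hex : Function.Exact f' g') (hsurj : Function.Surjective g')
    (hMinj : Function.Injective (LinearMap.rTensor M f')) :
    Function.Injective (LinearMap.rTensor L f') := by
  rw [injective_iff_map_eq_zero]
  intro x hx
  obtain ⟨y, rfl⟩ := (hpure A).2.2 x
  have h1 : lTensor B g (rTensor M f' y) = 0 := by
    have e1 := LinearMap.congr_fun (lTensor_comp_rTensor _ f' g) y
    have e2 := LinearMap.congr_fun (rTensor_comp_lTensor _ f' g) y
    simp only [coe_comp, comp_apply] at e1 e2
    rw [e1, ← e2, hx]
  obtain ⟨w, hw⟩ := ((hpure B).2.1 _).mp h1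
  have h3 : rTensor N g' w = 0 := by
    apply (hpure C).1
    have e1 := LinearMap.congr_fun (lTensor_comp_rTensor _ g' f) w
    have e2 := LinearMap.congr_fun (rTensor_comp_lTensor _ g' f) w
    simp only [coe_comp, comp_apply] at e1 e2
    rw [map_zero, e1, ← e2, hw]
    have e3 := LinearMap.congr_fun (rTensor_comp (M := M) (g := g') (f := f')) y
    simp only [coe_comp, comp_apply] at e3
    rw [← e3]
    have : g' ∘ₗ f' = 0 := hex.linearMap_comp_eq_zero
    rw [this]
    simp
  obtain ⟨u, hu⟩ := ((rTensor_exact N hex hsurj) w).mp h3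
  have h4 : lTensor A f u = y := by
    apply hMinj
    have e1 := LinearMap.congr_fun (lTensor_comp_rTensor _ f' f) u
    have e2 := LinearMap.congr_fun (rTensor_comp_lTensor _ f' f) u
    simp only [coe_comp, comp_apply] at e1 e2
    rw [e2, ← e1, hu, hw]
  rw [← h4]
  have e3 := LinearMap.congr_fun (lTensor_comp (M := A) (g := g) (f := f)) u
  simp only [coe_comp, comp_apply] at e3
  rw [← e3, hfg.linearMap_comp_eq_zero]
  simp

/-- the class of `S`-pure flat modules is closed under pure quotients. -/
theorem stmt3 [CommRing R] (S : Set (ModuleCat.{u} R)) {N M L : Type u}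
    [AddCommGroup N] [Module R N] [AddCommGroup M] [Module R M] [AddCommGroup L] [Module R L]
    (f : N →ₗ[R] M) (g : M →ₗ[R] L)
    (hf : Function.Injective f) (hg : Function.Surjective g) (hfg : Function.Exact f g)
    (hpure : ∀ (D : Type u) [AddCommGroup D] [Module R D],
      Function.Injective (LinearMap.lTensor D f) ∧
      Function.Exact (LinearMap.lTensor D f) (LinearMap.lTensor D g) ∧
      Function.Surjective (LinearMap.lTensor D g))
    (hM : IsSPureFlat S M) : IsSPureFlat S L := by
  intro A B C _ _ _ _ _ _ f' g' hS
  rw [lTensor_inj_iff_rTensor_inj]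
  exact stmt3_aux f g hfg hpure f' g' hS.2.2.1 hS.2.1
    ((lTensor_inj_iff_rTensor_inj _ _).mp (hM f' g' hS))
end

section
/- An exact sequence E: 0 → A → B → C → 0 of left R-modules is S-pure if and only if tr(U) ⊗_R E is exact for all U ∈ S, where tr(U) denotes the Auslander transpose of U. -/
open Function LinearMap

universe u

variable {R : Type u}

section AuxStmt5
open scoped TensorProduct

variable [CommRing R]

/-- The linear map `(Fin n → M) → (Fin k → M)` given by the matrix `m`. -/
def matAct {k n : ℕ} (m : Fin k → Fin n → R) (M : Type u) [AddCommGroup M] [Module R M] :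
    (Fin n → M) →ₗ[R] (Fin k → M) where
  toFun a := fun i => ∑ j, m i j • a j
  map_add' a b := by
    funext i
    simp [smul_add, Finset.sum_add_distrib]
  map_smul' r a := by
    funext i
    simp only [Pi.smul_apply, RingHom.id_apply, Finset.smul_sum]
    exact Finset.sum_congr rfl fun j _ => (smul_comm r (m i j) (a j)).symm

/-- `(Fin k → R) ⊗ M ≃ (Fin k → M)`. -/
noncomputable def pie (k : ℕ) (M : Type u) [AddCommGroup M] [Module R M] :
    ((Fin k → R) ⊗[R] M) ≃ₗ[R] (Fin k → M) :=
  (TensorProduct.comm R _ M) ≪≫ₗ (TensorProduct.piRight R R M fun _ : Fin k => R) ≪≫ₗ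
    (LinearEquiv.piCongrRight fun _ => TensorProduct.rid R M)

lemma pie_tmul {k : ℕ} {M : Type u} [AddCommGroup M] [Module R M] (x : Fin k → R) (a : M) :
    pie k M (x ⊗ₜ[R] a) = fun i => x i • a := by
  funext i
  simp [pie, TensorProduct.piRight_apply, TensorProduct.piRightHom_tmul]

lemma pie_lTensor {k : ℕ} {A B : Type u} [AddCommGroup A] [Module R A]
    [AddCommGroup B] [Module R B] (f : A →ₗ[R] B) (x : (Fin k → R) ⊗[R] A) :
    pie k B (LinearMap.lTensor (Fin k → R) f x) = fun i => f (pie k A x i) := by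
  have h : (pie k B).toLinearMap ∘ₗ LinearMap.lTensor (Fin k → R) f
      = (LinearMap.pi fun i => f ∘ₗ LinearMap.proj i) ∘ₗ (pie k A).toLinearMap := by
    apply TensorProduct.ext'
    intro x a
    simp only [LinearMap.coe_comp, Function.comp_apply, LinearEquiv.coe_coe,
      LinearMap.lTensor_tmul, pie_tmul]
    funext i
    simp [pie_tmul]
  exact LinearMap.congr_fun h x

lemma pie_rTensor {k n : ℕ} (m : Fin k → Fin n → R) {M : Type u} [AddCommGroup M] [Module R M]
    (x : (Fin n → R) ⊗[R] M) :
    pie k M (LinearMap.rTensor M (Matrix.of m).mulVecLin x) = matAct m M (pie n M x) := by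
  have h : (pie k M).toLinearMap ∘ₗ LinearMap.rTensor M (Matrix.of m).mulVecLin
      = (matAct m M) ∘ₗ (pie n M).toLinearMap := by
    apply TensorProduct.ext'
    intro x a
    simp only [LinearMap.coe_comp, Function.comp_apply, LinearEquiv.coe_coe,
      LinearMap.rTensor_tmul, pie_tmul]
    funext i
    simp only [matAct, LinearMap.coe_mk, AddHom.coe_mk, pie_tmul]
    rw [Matrix.mulVecLin_apply, Matrix.mulVec, dotProduct]
    rw [Finset.sum_smul]
    exact Finset.sum_congr rfl fun j _ => by rw [smul_smul, Matrix.of_apply]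
  exact LinearMap.congr_fun h x

variable {A B C : Type u} [AddCommGroup A] [Module R A] [AddCommGroup B] [Module R B]
  [AddCommGroup C] [Module R C]

/-- Lemma 2: injectivity of `tr U ⊗ f` is equivalent to an equation-solving condition. -/
lemma inj_lTensor_iff {k n : ℕ} (m : Fin k → Fin n → R) (f : A →ₗ[R] B) :
    Function.Injective (LinearMap.lTensor
        ((Fin k → R) ⧸ Submodule.span R (Set.range fun j : Fin n => fun i : Fin k => m i j)) f)
    ↔ ∀ a : Fin k → A, (∃ b : Fin n → B, (fun i => f (a i)) = matAct m B b) →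
        ∃ a' : Fin n → A, a = matAct m A a' := by
  set W : Submodule R (Fin k → R) :=
    Submodule.span R (Set.range fun j : Fin n => fun i : Fin k => m i j) with hW
  set μt : (Fin n → R) →ₗ[R] (Fin k → R) := (Matrix.of m).mulVecLin with hμt
  have hrange : LinearMap.range μt = W := by
    rw [hμt, Matrix.range_mulVecLin, hW]
    rfl
  have hexact : Function.Exact μt W.mkQ := by
    rw [LinearMap.exact_iff, Submodule.ker_mkQ]
    exact hrange.symm
  have hkerA : LinearMap.ker (LinearMap.rTensor A W.mkQ)
      = LinearMap.range (LinearMap.rTensor A μt) := by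
    rw [← LinearMap.exact_iff]
    exact rTensor_exact A hexact (Submodule.mkQ_surjective W)
  have hkerB : LinearMap.ker (LinearMap.rTensor B W.mkQ)
      = LinearMap.range (LinearMap.rTensor B μt) := by
    rw [← LinearMap.exact_iff]
    exact rTensor_exact B hexact (Submodule.mkQ_surjective W)
  have hsq : LinearMap.rTensor B W.mkQ ∘ₗ LinearMap.lTensor (Fin k → R) f
      = LinearMap.lTensor ((Fin k → R) ⧸ W) f ∘ₗ LinearMap.rTensor A W.mkQ := by
    rw [LinearMap.rTensor_comp_lTensor, LinearMap.lTensor_comp_rTensor]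
  constructor
  · rintro hinj a ⟨b, hb⟩
    obtain ⟨x, hx⟩ : ∃ x : (Fin k → R) ⊗[R] A, pie k A x = a := ⟨(pie k A).symm a, (pie k A).apply_symm_apply a⟩
    have h1 : LinearMap.lTensor (Fin k → R) f x ∈ LinearMap.range (LinearMap.rTensor B μt) := by
      refine ⟨(pie n B).symm b, (pie k B).injective ?_⟩
      rw [pie_rTensor, (pie n B).apply_symm_apply, pie_lTensor, hx]
      exact hb.symm
    have h2 : LinearMap.lTensor ((Fin k → R) ⧸ W) f (LinearMap.rTensor A W.mkQ x) = 0 := by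
      rw [← LinearMap.comp_apply, ← hsq, LinearMap.comp_apply]
      rw [← hkerB] at h1
      exact h1
    have h3 : LinearMap.rTensor A W.mkQ x = 0 := hinj (by rw [h2, map_zero])
    obtain ⟨y, hy⟩ : x ∈ LinearMap.range (LinearMap.rTensor A μt) := by
      rw [← hkerA]
      exact h3
    exact ⟨pie n A y, by rw [← hx, ← hy, pie_rTensor]⟩
  · intro hP
    rw [← LinearMap.ker_eq_bot, Submodule.eq_bot_iff]
    intro t ht
    obtain ⟨x, rfl⟩ := LinearMap.rTensor_surjective A (g := W.mkQ) (Submodule.mkQ_surjective W) t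
    have h1 : LinearMap.rTensor B W.mkQ (LinearMap.lTensor (Fin k → R) f x) = 0 := by
      rw [← LinearMap.comp_apply, hsq, LinearMap.comp_apply]
      exact ht
    obtain ⟨y, hy⟩ : LinearMap.lTensor (Fin k → R) f x
        ∈ LinearMap.range (LinearMap.rTensor B μt) := by
      rw [← hkerB]
      exact h1
    obtain ⟨a', ha'⟩ := hP (pie k A x) ⟨pie n B y, by
      rw [← pie_rTensor m y, hy, pie_lTensor]⟩
    have : x = LinearMap.rTensor A μt ((pie n A).symm a') := by
      apply (pie k A).injective
      rw [pie_rTensor, (pie n A).apply_symm_apply, ha']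
    rw [this, ← LinearMap.mem_ker, hkerA]
    exact ⟨(pie n A).symm a', rfl⟩

/-- The linear map `x ↦ ∑ j, x j • v j`. -/
def combo {n : ℕ} {M : Type u} [AddCommGroup M] [Module R M] (v : Fin n → M) :
    (Fin n → R) →ₗ[R] M where
  toFun x := ∑ j, x j • v j
  map_add' x y := by simp [add_smul, Finset.sum_add_distrib]
  map_smul' r x := by
    simp only [Pi.smul_apply, smul_eq_mul, RingHom.id_apply, Finset.smul_sum]
    exact Finset.sum_congr rfl fun j _ => by rw [mul_smul]

lemma combo_apply {n : ℕ} {M : Type u} [AddCommGroup M] [Module R M] (v : Fin n → M)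
    (x : Fin n → R) : combo v x = ∑ j, x j • v j := rfl

lemma combo_single {n : ℕ} {M : Type u} [AddCommGroup M] [Module R M] (v : Fin n → M)
    (j : Fin n) : combo v (Pi.single j (1 : R)) = v j := by
  rw [combo_apply]
  simp [Pi.single_apply, ite_smul]

lemma single_smul_sum {n : ℕ} (x : Fin n → R) :
    (∑ j, x j • (Pi.single j (1 : R) : Fin n → R)) = x := by
  funext j'
  simp [Pi.single_apply, Finset.sum_apply]

lemma factor_through {n : ℕ} {U M : Type u} [AddCommGroup U] [Module R U]
    [AddCommGroup M] [Module R M] (π : (Fin n → R) →ₗ[R] U) (hπ : Function.Surjective π)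
    (ℓ : (Fin n → R) →ₗ[R] M) (h : LinearMap.ker π ≤ LinearMap.ker ℓ) :
    ∃ h' : U →ₗ[R] M, h' ∘ₗ π = ℓ := by
  refine ⟨(LinearMap.ker π).liftQ ℓ h ∘ₗ (π.quotKerEquivOfSurjective hπ).symm,
    LinearMap.ext fun x => ?_⟩
  have hmk : (π.quotKerEquivOfSurjective hπ).symm (π x) = Submodule.Quotient.mk x := by
    apply (π.quotKerEquivOfSurjective hπ).injective
    rw [LinearEquiv.apply_symm_apply]
    rfl
  simp only [LinearMap.comp_apply, LinearEquiv.coe_coe, hmk, Submodule.liftQ_apply]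

/-- Lemma 1: the lifting property for `U` is equivalent to the equation-solving condition. -/
lemma lift_iff_solve {k n : ℕ} (m : Fin k → Fin n → R) {U : Type u} [AddCommGroup U]
    [Module R U] (f : A →ₗ[R] B) (g : B →ₗ[R] C)
    (hf : Function.Injective f) (hg : Function.Surjective g) (hfg : Function.Exact f g)
    (π : (Fin n → R) →ₗ[R] U) (hπ : Function.Surjective π)
    (hker : LinearMap.ker π = Submodule.span R (Set.range m)) :
    (∀ h : U →ₗ[R] C, ∃ h' : U →ₗ[R] B, g ∘ₗ h' = h)
    ↔ ∀ a : Fin k → A, (∃ b : Fin n → B, (fun i => f (a i)) = matAct m B b) →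
        ∃ a' : Fin n → A, a = matAct m A a' := by
  have hπm : ∀ i, π (m i) = 0 := by
    intro i
    rw [← LinearMap.mem_ker, hker]
    exact Submodule.subset_span ⟨i, rfl⟩
  classical
  constructor
  · rintro hlift a ⟨b, hb⟩
    have hb' : ∀ i, f (a i) = ∑ j, m i j • b j := fun i => congrFun hb i
    set c : Fin n → C := fun j => g (b j) with hc
    have hgf : ∀ x : A, g (f x) = 0 := fun x => hfg.apply_apply_eq_zero x
    set ℓ : (Fin n → R) →ₗ[R] C := combo c with hℓ
    have hkerℓ : LinearMap.ker π ≤ LinearMap.ker ℓ := by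
      rw [hker, Submodule.span_le]
      rintro _ ⟨i, rfl⟩
      simp only [SetLike.mem_coe, LinearMap.mem_ker, hℓ, combo_apply]
      calc (∑ j, m i j • c j) = g (∑ j, m i j • b j) := by
            rw [map_sum]; exact Finset.sum_congr rfl fun j _ => by rw [map_smul]
        _ = g (f (a i)) := by rw [← hb' i]
        _ = 0 := hgf _
    obtain ⟨h, hh⟩ := factor_through π hπ ℓ hkerℓ
    obtain ⟨h', hh'⟩ := hlift h
    have hℓsingle : ∀ j, ℓ (Pi.single j (1 : R)) = c j := fun j => by
      rw [hℓ, combo_single]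
    have hgb' : ∀ j, g (b j - h' (π (Pi.single j (1 : R)))) = 0 := by
      intro j
      have h1 : g (h' (π (Pi.single j (1 : R)))) = c j := by
        rw [← LinearMap.comp_apply g h', hh', ← hℓsingle j, ← hh]
        rfl
      rw [map_sub, h1]
      simp [hc]
    choose a' ha' using fun j => (hfg (b j - h' (π (Pi.single j (1:R))))).mp (hgb' j)
    refine ⟨a', funext fun i => hf ?_⟩
    show f (a i) = f (∑ j, m i j • a' j)
    have hsum : ∑ j, m i j • h' (π ((Pi.single j (1:R) : Fin n → R))) = 0 := by
      have : ∑ j, m i j • h' (π ((Pi.single j (1:R) : Fin n → R)))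
          = h' (π (∑ j, m i j • (Pi.single j (1:R) : Fin n → R))) := by
        rw [map_sum, map_sum]
        exact Finset.sum_congr rfl fun j _ => by rw [map_smul, map_smul]
      rw [this, single_smul_sum, hπm i, map_zero]
    calc f (a i) = ∑ j, m i j • b j := hb' i
      _ = ∑ j, m i j • (b j - h' (π (Pi.single j (1:R)))) := by
          rw [← sub_zero (∑ j, m i j • b j), ← hsum, ← Finset.sum_sub_distrib]
          exact Finset.sum_congr rfl fun j _ => by rw [smul_sub]
      _ = ∑ j, m i j • f (a' j) := Finset.sum_congr rfl fun j _ => by rw [ha' j]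
      _ = f (∑ j, m i j • a' j) := by
          rw [map_sum]
          exact (Finset.sum_congr rfl fun j _ => by rw [map_smul]).symm
  · intro hP h
    set c : Fin n → C := fun j => h (π (Pi.single j (1 : R))) with hc
    choose b hb using fun j => hg (c j)
    have hrow : ∀ x : Fin n → R, h (π x) = ∑ j, x j • c j := by
      intro x
      conv_lhs => rw [← single_smul_sum x]
      rw [map_sum, map_sum]
      exact Finset.sum_congr rfl fun j _ => by rw [map_smul, map_smul]
    have hgsum : ∀ i, g (∑ j, m i j • b j) = 0 := by
      intro i
      have : g (∑ j, m i j • b j) = ∑ j, m i j • c j := by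
        rw [map_sum]
        exact Finset.sum_congr rfl fun j _ => by rw [map_smul, hb j]
      rw [this, ← hrow (m i), hπm i, map_zero]
    choose a ha using fun i => (hfg (∑ j, m i j • b j)).mp (hgsum i)
    obtain ⟨a', ha'⟩ := hP a ⟨b, funext fun i => ha i⟩
    have ha'i : ∀ i, a i = ∑ j, m i j • a' j := fun i => congrFun ha' i
    set ℓ : (Fin n → R) →ₗ[R] B := combo (fun j => b j - f (a' j)) with hℓ
    have hkerℓ : LinearMap.ker π ≤ LinearMap.ker ℓ := by
      rw [hker, Submodule.span_le]
      rintro _ ⟨i, rfl⟩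
      simp only [SetLike.mem_coe, LinearMap.mem_ker, hℓ, combo_apply]
      have h1 : (∑ j, m i j • (b j - f (a' j)))
          = (∑ j, m i j • b j) - ∑ j, m i j • f (a' j) := by
        rw [← Finset.sum_sub_distrib]
        exact Finset.sum_congr rfl fun j _ => by rw [smul_sub]
      have h2 : (∑ j, m i j • f (a' j)) = f (a i) := by
        rw [ha'i i, map_sum]
        exact Finset.sum_congr rfl fun j _ => by rw [map_smul]
      rw [h1, h2, ha i, sub_self]
    obtain ⟨h', hh'⟩ := factor_through π hπ ℓ hkerℓ
    refine ⟨h', ?_⟩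
    have key : ∀ x : Fin n → R, g (h' (π x)) = h (π x) := by
      intro x
      have h1 : h' (π x) = ℓ x := by rw [← LinearMap.comp_apply h' π, hh']
      have h2 : g (ℓ x) = ∑ j, x j • c j := by
        rw [hℓ, combo_apply, map_sum]
        refine Finset.sum_congr rfl fun j _ => ?_
        rw [map_smul, map_sub, hb j, hfg.apply_apply_eq_zero, sub_zero]
      rw [h1, h2, hrow x]
    ext u
    obtain ⟨x, rfl⟩ := hπ u
    exact key x

end AuxStmt5

/-- an exact sequence `E : 0 → A → B → C → 0` is `S`-pure iff `tr U ⊗ E` is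
exact for all `U ∈ S`, where `tr U` is the Auslander transpose of `U` (the cokernel of the
transpose of any matrix presenting `U`). -/
theorem stmt5 [CommRing R] (S : Set (ModuleCat.{u} R))
    (hfp : ∀ U ∈ S, Module.FinitePresentation R U)
    {A B C : Type u} [AddCommGroup A] [Module R A] [AddCommGroup B] [Module R B]
    [AddCommGroup C] [Module R C] (f : A →ₗ[R] B) (g : B →ₗ[R] C)
    (hf : Function.Injective f) (hg : Function.Surjective g) (hfg : Function.Exact f g) :
    SPureLift S g ↔
      ∀ U ∈ S, ∀ (k n : ℕ) (m : Fin k → (Fin n → R)) (π : (Fin n → R) →ₗ[R] U),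
        Function.Surjective π → LinearMap.ker π = Submodule.span R (Set.range m) →
        (Function.Injective (LinearMap.lTensor ((Fin k → R) ⧸ Submodule.span R (Set.range fun j : Fin n => fun i : Fin k => m i j)) f) ∧
         Function.Exact (LinearMap.lTensor ((Fin k → R) ⧸ Submodule.span R (Set.range fun j : Fin n => fun i : Fin k => m i j)) f) (LinearMap.lTensor ((Fin k → R) ⧸ Submodule.span R (Set.range fun j : Fin n => fun i : Fin k => m i j)) g) ∧
         Function.Surjective (LinearMap.lTensor ((Fin k → R) ⧸ Submodule.span R (Set.range fun j : Fin n => fun i : Fin k => m i j)) g)) := by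
  constructor
  · intro hpure U hU k n m π hπ hker
    refine ⟨?_, lTensor_exact _ hfg hg, LinearMap.lTensor_surjective _ hg⟩
    exact (inj_lTensor_iff m f).mpr
      ((lift_iff_solve m f g hf hg hfg π hπ hker).mp (hpure U hU))
  · intro htens U hU h
    haveI := hfp U hU
    obtain ⟨n, π, hπ⟩ := Module.Finite.exists_fin' R U
    obtain ⟨k, m, hm⟩ := Submodule.fg_iff_exists_fin_generating_family.mp
      (Module.FinitePresentation.fg_ker π hπ)
    obtain ⟨hinj, -, -⟩ := htens U hU k n m π hπ hm.symm
    exact (lift_iff_solve m f g hf hg hfg π hπ hm.symm).mpr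
      ((inj_lTensor_iff m f).mp hinj) h
end

section
/- An exact sequence 0 → A → B → C → 0 of left R-modules with A a submodule of B is S-pure if and only if for every k×n matrix μ over R viewed as a map R^k → R^n whose transpose has cokernel in S, one has μ(A^k) = A^n ∩ μ(B^k). -/
open Function LinearMap

universe u

variable {R : Type u}

section AuxStmt6
variable [Ring R]

/-- The linear map `R^k → M` sending `f` to `∑ i, f i • v i`. -/
private def lcAux {k : ℕ} {M : Type u} [AddCommGroup M] [Module R M]
    (v : Fin k → M) : (Fin k → R) →ₗ[R] M where
  toFun f := ∑ i, f i • v i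
  map_add' f g := by simp [add_smul, Finset.sum_add_distrib]
  map_smul' r f := by simp [mul_smul, Finset.smul_sum]

private lemma lcAux_apply {k : ℕ} {M : Type u} [AddCommGroup M] [Module R M]
    (v : Fin k → M) (f : Fin k → R) : lcAux v f = ∑ i, f i • v i := rfl

private lemma mapEqSum {k : ℕ} {M : Type u} [AddCommGroup M] [Module R M]
    (T : (Fin k → R) →ₗ[R] M) (f : Fin k → R) :
    T f = ∑ i, f i • T (fun j => if i = j then 1 else 0) :=
  LinearMap.pi_apply_eq_sum_univ T f

private lemma lcAux_single {k : ℕ} {M : Type u} [AddCommGroup M] [Module R M]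
    (v : Fin k → M) (i : Fin k) :
    lcAux (R := R) v (fun j => if i = j then 1 else 0) = v i := by
  rw [lcAux_apply]
  simp [ite_smul, Finset.sum_ite_eq]

end AuxStmt6

/-- an exact sequence `0 → A → B → B/A → 0` is `S`-pure iff for every matrix
`μ : R^k → R^n` whose transpose has cokernel in `S`, one has `μ(A^k) = A^n ∩ μ(B^k)`. -/
theorem stmt6 [Ring R] (S : Set (ModuleCat.{u} R))
    (hfp : ∀ U ∈ S, Module.FinitePresentation R U)
    {B : Type u} [AddCommGroup B] [Module R B] (A : Submodule R B) :
    IsSPureSubmodule S A ↔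
      ∀ (k n : ℕ) (μ : Fin n → Fin k → R),
        (∃ U ∈ S,
          Nonempty (((Fin k → R) ⧸ Submodule.span R (Set.range μ)) ≃ₗ[R] U)) →
        {a : Fin n → B |
            ∃ x : Fin k → B, (∀ i, x i ∈ A) ∧ ∀ j, (∑ i, μ j i • x i) = a j} =
          {a : Fin n → B |
            (∀ j, a j ∈ A) ∧ ∃ x : Fin k → B, ∀ j, (∑ i, μ j i • x i) = a j} := by
  constructor
  · -- purity implies the matrix condition
    rintro hpure k n μ ⟨U, hU, ⟨e⟩⟩
    ext a
    simp only [Set.mem_setOf_eq]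
    constructor
    · rintro ⟨x, hx, hμ⟩
      refine ⟨fun j => ?_, x, hμ⟩
      rw [← hμ j]
      exact Submodule.sum_mem _ fun i _ => A.smul_mem _ (hx i)
    · rintro ⟨ha, x, hμ⟩
      set g : (Fin k → R) →ₗ[R] B ⧸ A := A.mkQ ∘ₗ lcAux x with hgdef
      have hg : Submodule.span R (Set.range μ) ≤ LinearMap.ker g := by
        rw [Submodule.span_le]
        rintro _ ⟨j, rfl⟩
        simp only [SetLike.mem_coe, LinearMap.mem_ker, hgdef, LinearMap.comp_apply]
        rw [lcAux_apply, hμ j]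
        simpa [Submodule.Quotient.mk_eq_zero] using ha j
      set gbar := Submodule.liftQ _ g hg with hgbar
      obtain ⟨h', hh'⟩ := hpure U hU (gbar ∘ₗ (e.symm : U →ₗ[R] _))
      set G : (Fin k → R) →ₗ[R] B :=
        h' ∘ₗ (e : _ →ₗ[R] U) ∘ₗ (Submodule.span R (Set.range μ)).mkQ with hGdef
      have hGg : ∀ f : Fin k → R, A.mkQ (G f) = g f := by
        intro f
        have h0 : A.mkQ (h' ((e : _ →ₗ[R] U) ((Submodule.span R (Set.range μ)).mkQ f)))
            = (A.mkQ ∘ₗ h') ((e : _ →ₗ[R] U) ((Submodule.span R (Set.range μ)).mkQ f)) := rfl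
        simp only [hGdef, LinearMap.comp_apply, h0, hh']
        simp [hgbar]
      refine ⟨fun i => x i - G (fun j => if i = j then 1 else 0), fun i => ?_, fun j => ?_⟩
      · rw [← Submodule.Quotient.mk_eq_zero, ← Submodule.mkQ_apply, map_sub, hGg]
        simp only [hgdef, LinearMap.comp_apply, lcAux_single]
        exact sub_self _
      · have hGμ : G (μ j) = 0 := by
          have hmem : μ j ∈ Submodule.span R (Set.range μ) :=
            Submodule.subset_span ⟨j, rfl⟩
          simp only [hGdef, LinearMap.comp_apply, Submodule.mkQ_apply]
          rw [(Submodule.Quotient.mk_eq_zero _).mpr hmem]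
          simp
        have hsum := mapEqSum G (μ j)
        rw [hGμ] at hsum
        calc ∑ i, μ j i • (x i - G fun j' => if i = j' then 1 else 0)
            = (∑ i, μ j i • x i) - ∑ i, μ j i • G (fun j' => if i = j' then 1 else 0) := by
              simp [smul_sub, Finset.sum_sub_distrib]
          _ = a j := by rw [← hsum, hμ j, sub_zero]
  · -- the matrix condition implies purity
    intro H U hU h
    haveI := hfp U hU
    obtain ⟨k, π, hπ⟩ := Module.Finite.exists_fin' R U
    obtain ⟨n, μ, hspan⟩ := Submodule.fg_iff_exists_fin_generating_family.mp
      (Module.FinitePresentation.fg_ker π hπ)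
    set e' : ((Fin k → R) ⧸ Submodule.span R (Set.range μ)) ≃ₗ[R] U :=
      (Submodule.quotEquivOfEq _ _ hspan).trans (π.quotKerEquivOfSurjective hπ) with he'
    choose x hx using fun i =>
      A.mkQ_surjective (h (e' (Submodule.Quotient.mk (fun j => if i = j then (1:R) else 0))))
    have hcomp : ∀ f : Fin k → R, A.mkQ (lcAux x f) = h (e' (Submodule.Quotient.mk f)) := by
      intro f
      have h1 : A.mkQ (lcAux x f) = ∑ i, f i • A.mkQ (x i) := by
        rw [lcAux_apply, map_sum]
        exact Finset.sum_congr rfl fun i _ => by rw [map_smul]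
      have h2 := mapEqSum (h ∘ₗ (e' : _ →ₗ[R] U) ∘ₗ (Submodule.span R (Set.range μ)).mkQ) f
      simp only [LinearMap.comp_apply, Submodule.mkQ_apply, LinearEquiv.coe_coe] at h2
      rw [h1, h2]
      exact Finset.sum_congr rfl fun i _ => by rw [hx]
    have ha : ∀ j, (∑ i, μ j i • x i) ∈ A := by
      intro j
      rw [← Submodule.Quotient.mk_eq_zero, ← Submodule.mkQ_apply]
      have h2 := hcomp (μ j)
      rw [lcAux_apply] at h2
      rw [h2, (Submodule.Quotient.mk_eq_zero _).mpr (Submodule.subset_span (Set.mem_range_self j))]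
      simp
    have hiso : ∃ U' ∈ S,
        Nonempty (((Fin k → R) ⧸ Submodule.span R (Set.range μ)) ≃ₗ[R] U') := ⟨U, hU, ⟨e'⟩⟩
    have hset := H k n μ hiso
    have hmem : (fun j => ∑ i, μ j i • x i) ∈ {a : Fin n → B |
        (∀ j, a j ∈ A) ∧ ∃ x : Fin k → B, ∀ j, (∑ i, μ j i • x i) = a j} :=
      ⟨ha, x, fun j => rfl⟩
    rw [← hset] at hmem
    obtain ⟨z, hz, hμz⟩ := hmem
    set G : (Fin k → R) →ₗ[R] B := lcAux (fun i => x i - z i) with hGdef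
    have hG : Submodule.span R (Set.range μ) ≤ LinearMap.ker G := by
      rw [Submodule.span_le]
      rintro _ ⟨j, rfl⟩
      simp only [SetLike.mem_coe, LinearMap.mem_ker, hGdef]
      rw [lcAux_apply]
      have hsplit : ∑ i, μ j i • (x i - z i) = (∑ i, μ j i • x i) - ∑ i, μ j i • z i := by
        simp [smul_sub, Finset.sum_sub_distrib]
      rw [hsplit, hμz j]
      exact sub_self _
    refine ⟨Submodule.liftQ _ G hG ∘ₗ (e'.symm : U →ₗ[R] _), LinearMap.ext fun u => ?_⟩
    obtain ⟨q, rfl⟩ := e'.surjective u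
    obtain ⟨f, rfl⟩ := Submodule.Quotient.mk_surjective _ q
    simp only [LinearMap.comp_apply, LinearEquiv.coe_coe, LinearEquiv.symm_apply_apply,
      Submodule.liftQ_apply]
    have hGf : G f = lcAux x f - lcAux z f := by
      rw [hGdef, lcAux_apply, lcAux_apply, lcAux_apply]
      simp [smul_sub, Finset.sum_sub_distrib]
    have hz0 : A.mkQ (lcAux z f) = 0 := by
      have hmem2 : lcAux z f ∈ A := by
        rw [lcAux_apply]
        exact Submodule.sum_mem _ fun i _ => A.smul_mem _ (hz i)
      rwa [Submodule.mkQ_apply, Submodule.Quotient.mk_eq_zero]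
    rw [hGf, map_sub, hcomp, hz0, sub_zero]
end

section
/- An exact sequence 0 → A → B →^ψ C → 0 is S-pure if and only if for every matrix (r_ij) ∈ Hom_R(R^n, R^k) with Coker(r_ij) ∈ S and all a_1,…,a_n ∈ A, whenever the system of linear equations Σ_{i=1}^k r_ij x_i = a_j (1 ≤ j ≤ n) is solvable in B, it is solvable in A. -/
open Function LinearMap

universe u

variable {R : Type u}

/-!
A map `(Fin k → R) ⧸ ⟨r 0, …, r (n-1)⟩ → M` is the same as a family `y : Fin k → M` with
`∑ i, r j i • y i = 0` for all `j`, and every finitely presented module has this form. So lifting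
maps from such a cokernel along `ψ` means lifting a solution `c` of the homogeneous system in `C`
to one in `B`. Given a preimage `x` of `c`, this is possible exactly when the system with right-hand
side `a j = ∑ i, r j i • x i ∈ A` has a solution `x'` in `A`: then `x - x'` is the lift.
-/

abbrev MatrixCoker [Ring R] {n k : ℕ} (r : Fin n → Fin k → R) : Type u :=
  (Fin k → R) ⧸ Submodule.span R (Set.range r)

section MatrixCoker

variable [Ring R] {n k : ℕ} {M : Type*} [AddCommGroup M] [Module R M]

theorem span_range_le_ker_linearCombination_iff (r : Fin n → Fin k → R) (y : Fin k → M) :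
    Submodule.span R (Set.range r) ≤ ker (Fintype.linearCombination R y) ↔
      ∀ j, ∑ i, r j i • y i = 0 := by
  simp only [Submodule.span_le, Set.range_subset_iff, SetLike.mem_coe, mem_ker,
    Fintype.linearCombination_apply]

theorem comp_mkQ_eq_linearCombination {p : Submodule R (Fin k → R)}
    (ℓ : ((Fin k → R) ⧸ p) →ₗ[R] M) :
    ℓ ∘ₗ p.mkQ = Fintype.linearCombination R (fun i => ℓ (p.mkQ (Pi.single i 1))) := by
  ext i
  simp

theorem sum_smul_map_mkQ_single_eq_zero {r : Fin n → Fin k → R} (ℓ : MatrixCoker r →ₗ[R] M)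
    (j : Fin n) : ∑ i, r j i • ℓ (Submodule.mkQ _ (Pi.single i 1)) = 0 := by
  refine (span_range_le_ker_linearCombination_iff r _).mp ?_ j
  rw [← comp_mkQ_eq_linearCombination]
  exact (Submodule.ker_mkQ _).ge.trans (ker_le_ker_comp _ _)

end MatrixCoker

theorem Module.FinitePresentation.exists_linearEquiv_matrixCoker [Ring R] (U : Type u)
    [AddCommGroup U] [Module R U] [Module.FinitePresentation R U] :
    ∃ (k n : ℕ) (r : Fin n → Fin k → R), Nonempty (MatrixCoker r ≃ₗ[R] U) := by
  obtain ⟨k, K, e, hK⟩ := Module.FinitePresentation.exists_fin R U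
  obtain ⟨n, r, rfl⟩ := Submodule.fg_iff_exists_fin_generating_family.mp hK
  exact ⟨k, n, r, ⟨e.symm⟩⟩

def HasLiftsAlong [Ring R] {B C : Type*} [AddCommGroup B] [Module R B] [AddCommGroup C]
    [Module R C] (ψ : B →ₗ[R] C) (U : Type*) [AddCommGroup U] [Module R U] : Prop :=
  ∀ h : U →ₗ[R] C, ∃ h' : U →ₗ[R] B, ψ ∘ₗ h' = h

section HasLiftsAlong

variable [Ring R] {B C : Type*} [AddCommGroup B] [Module R B] [AddCommGroup C] [Module R C]
  (ψ : B →ₗ[R] C)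

theorem hasLiftsAlong_congr {U V : Type*} [AddCommGroup U] [Module R U] [AddCommGroup V]
    [Module R V] (e : U ≃ₗ[R] V) : HasLiftsAlong ψ U ↔ HasLiftsAlong ψ V := by
  refine ⟨fun hU h => ?_, fun hV h => ?_⟩
  · obtain ⟨h', hh'⟩ := hU (h ∘ₗ e.toLinearMap)
    refine ⟨h' ∘ₗ e.symm.toLinearMap, LinearMap.ext fun v => ?_⟩
    simpa using LinearMap.congr_fun hh' (e.symm v)
  · obtain ⟨h', hh'⟩ := hV (h ∘ₗ e.symm.toLinearMap)
    refine ⟨h' ∘ₗ e.toLinearMap, LinearMap.ext fun u => ?_⟩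
    simpa using LinearMap.congr_fun hh' (e u)

variable {n k : ℕ}

theorem exists_solution_mem_ker_of_hasLiftsAlong {r : Fin n → Fin k → R}
    (hlift : HasLiftsAlong ψ (MatrixCoker r)) (a : Fin n → B) (ha : ∀ j, a j ∈ ker ψ)
    (x : Fin k → B) (hx : ∀ j, ∑ i, r j i • x i = a j) :
    ∃ x' : Fin k → B, (∀ i, x' i ∈ ker ψ) ∧ ∀ j, ∑ i, r j i • x' i = a j := by
  have hrel : Submodule.span R (Set.range r) ≤
      ker (Fintype.linearCombination R (fun i => ψ (x i))) :=
    (span_range_le_ker_linearCombination_iff r _).mpr fun j => by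
      simp only [← map_smul, ← map_sum, hx j, mem_ker.mp (ha j)]
  obtain ⟨ℓ, hℓ⟩ := hlift (Submodule.liftQ _ _ hrel)
  have hψℓ : ∀ i, ψ (ℓ (Submodule.mkQ _ (Pi.single i 1))) = ψ (x i) := fun i => by
    simpa using LinearMap.congr_fun hℓ (Submodule.mkQ _ (Pi.single i 1))
  refine ⟨fun i => x i - ℓ (Submodule.mkQ _ (Pi.single i 1)), fun i => ?_, fun j => ?_⟩
  · rw [mem_ker, map_sub, hψℓ, sub_self]
  · simp only [smul_sub, Finset.sum_sub_distrib, hx j, sum_smul_map_mkQ_single_eq_zero ℓ j,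
      sub_zero]

theorem hasLiftsAlong_of_exists_solution_mem_ker (hψ : Surjective ψ) {r : Fin n → Fin k → R}
    (hsolve : ∀ a : Fin n → B, (∀ j, a j ∈ ker ψ) →
      (∃ x : Fin k → B, ∀ j, ∑ i, r j i • x i = a j) →
      ∃ x : Fin k → B, (∀ i, x i ∈ ker ψ) ∧ ∀ j, ∑ i, r j i • x i = a j) :
    HasLiftsAlong ψ (MatrixCoker r) := by
  intro h
  choose x hx using fun i => hψ (h (Submodule.mkQ _ (Pi.single i 1)))
  have ha : ∀ j, ∑ i, r j i • x i ∈ ker ψ := fun j => by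
    simp only [mem_ker, map_sum, map_smul, hx, sum_smul_map_mkQ_single_eq_zero h j]
  obtain ⟨x', hx'ker, hx'⟩ := hsolve _ ha ⟨x, fun _ => rfl⟩
  have hrel : Submodule.span R (Set.range r) ≤ ker (Fintype.linearCombination R (x - x')) :=
    (span_range_le_ker_linearCombination_iff r _).mpr fun j => by
      simp only [Pi.sub_apply, smul_sub, Finset.sum_sub_distrib, hx', sub_self]
  refine ⟨Submodule.liftQ _ _ hrel, Submodule.linearMap_qext _ ?_⟩
  ext i
  simp [hx, mem_ker.mp (hx'ker i)]

end HasLiftsAlong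

/-- an exact sequence `0 → A → B →ψ C → 0` is `S`-pure iff every system of
linear equations `∑ i, r j i • x i = a j` with matrix having cokernel in `S` and constants
in `A` which is solvable in `B` is solvable in `A`. -/
theorem stmt7 [Ring R] (S : Set (ModuleCat.{u} R))
    (hfp : ∀ U ∈ S, Module.FinitePresentation R U)
    {B C : Type u} [AddCommGroup B] [Module R B] [AddCommGroup C] [Module R C]
    (A : Submodule R B) (ψ : B →ₗ[R] C) (hψ : Function.Surjective ψ)
    (hker : LinearMap.ker ψ = A) :
    SPureLift S ψ ↔
      ∀ (k n : ℕ) (r : Fin n → Fin k → R),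
        (∃ U ∈ S,
          Nonempty (((Fin k → R) ⧸ Submodule.span R (Set.range r)) ≃ₗ[R] U)) →
        ∀ a : Fin n → B, (∀ j, a j ∈ A) →
          (∃ x : Fin k → B, ∀ j, (∑ i, r j i • x i) = a j) →
          ∃ x : Fin k → B, (∀ i, x i ∈ A) ∧ ∀ j, (∑ i, r j i • x i) = a j := by
  subst hker
  constructor
  · rintro hlift k n r ⟨U, hU, ⟨e⟩⟩ a ha ⟨x, hx⟩
    exact exists_solution_mem_ker_of_hasLiftsAlong ψ
      ((hasLiftsAlong_congr ψ e).mpr (hlift U hU)) a ha x hx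
  · intro hsolve U hU
    have := hfp U hU
    obtain ⟨k, n, r, ⟨e⟩⟩ := Module.FinitePresentation.exists_linearEquiv_matrixCoker (R := R) U
    exact (hasLiftsAlong_congr ψ e).mp
      (hasLiftsAlong_of_exists_solution_mem_ker ψ hψ (hsolve k n r ⟨U, hU, ⟨e⟩⟩))
end

section
/- An exact sequence X: 0 → X₁ → X₂ → X₃ → 0 of left R-modules is S-pure if and only if Hom_R(P, X) is exact for every S-pure projective R-module P, if and only if Hom_R(X, E) is exact for every S-pure injective R-module E, if and only if F ⊗_R X is exact for every S-pure flat right R-module F. -/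
open Function LinearMap

universe u

variable {R : Type u}

/-! Each `U ∈ S` is `S`-pure projective, which gives the projective characterization. For the
other two, choose a finite free presentation `F₁ →d F₀ → U → 0` and let `T = coker (d^*)` be its
Auslander transpose. For every module `M`, `Hom(U, M)` is the kernel and `T ⊗ M` the cokernel of
`- ∘ d : Hom(F₀, M) → Hom(F₁, M)`, so the snake lemma applied to this map over a short exact
sequence `0 → A → B → C → 0` shows that `Hom(U, B) → Hom(U, C)` is onto iff `T ⊗ A → T ⊗ B` is
injective. Hence `T` is `S`-pure flat, its character module is `S`-pure injective, and testing
exactness against either of them recovers the lifting property for `U`. -/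

section

variable [CommRing R]

namespace LinearMap

variable {M₁ M₂ M₃ : Type u} [AddCommGroup M₁] [Module R M₁]
  [AddCommGroup M₂] [Module R M₂] [AddCommGroup M₃] [Module R M₃]

lemma exact_compRight_of_exact_of_injective (P : Type u) [AddCommGroup P] [Module R P]
    {f : M₁ →ₗ[R] M₂} {g : M₂ →ₗ[R] M₃} (hfg : Exact f g) (hf : Injective f) :
    Exact (f.compRight (M := P) R) (g.compRight R) := by
  intro k
  refine ⟨fun hk => ?_, ?_⟩
  · have hmem : ∀ x, k x ∈ range f := fun x => (hfg (k x)).mp (LinearMap.congr_fun hk x)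
    refine ⟨(LinearEquiv.ofInjective f hf).symm.toLinearMap ∘ₗ k.codRestrict _ hmem, ?_⟩
    ext x
    simp
  · rintro ⟨h, rfl⟩
    simp [← comp_assoc, hfg.linearMap_comp_eq_zero]

end LinearMap

open TensorProduct

section Transpose

variable {F₀ F₁ : Type u} [AddCommGroup F₀] [Module R F₀] [AddCommGroup F₁]
  [Module R F₁] (d : F₁ →ₗ[R] F₀)

abbrev AuslanderTranspose : Type u := Module.Dual R F₁ ⧸ range d.dualMap

variable [Module.Finite R F₁] [Module.Projective R F₁]

noncomputable def homToTransposeTensor (M : Type u) [AddCommGroup M] [Module R M] :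
    (F₁ →ₗ[R] M) →ₗ[R] AuslanderTranspose d ⊗[R] M :=
  rTensor M (range d.dualMap).mkQ ∘ₗ (dualTensorHomEquiv R F₁ M).symm

lemma homToTransposeTensor_surjective (M : Type u) [AddCommGroup M] [Module R M] :
    Surjective (homToTransposeTensor d M) :=
  (rTensor_surjective M (Submodule.mkQ_surjective _)).comp (LinearEquiv.surjective _)

lemma lTensor_comp_homToTransposeTensor {M N : Type u} [AddCommGroup M] [Module R M]
    [AddCommGroup N] [Module R N] (f : M →ₗ[R] N) :
    lTensor (AuslanderTranspose d) f ∘ₗ homToTransposeTensor d M =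
      homToTransposeTensor d N ∘ₗ f.compRight R := by
  have h : (dualTensorHomEquiv R F₁ N).symm ∘ₗ f.compRight R =
      lTensor _ f ∘ₗ (dualTensorHomEquiv R F₁ M).symm.toLinearMap := by
    rw [LinearEquiv.eq_comp_toLinearMap_symm, LinearMap.comp_assoc,
      LinearEquiv.toLinearMap_symm_comp_eq]
    exact (dualTensorHom_comp_lTensor f).symm
  rw [homToTransposeTensor, homToTransposeTensor, LinearMap.comp_assoc, h, ← LinearMap.comp_assoc,
    ← LinearMap.comp_assoc, lTensor_comp_rTensor, rTensor_comp_lTensor]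

lemma exact_lcomp_homToTransposeTensor [Module.Finite R F₀] [Module.Projective R F₀]
    (M : Type u) [AddCommGroup M] [Module R M] :
    Exact (lcomp R M d) (homToTransposeTensor d M) := by
  have hrow : Exact (rTensor M d.dualMap) (rTensor M (range d.dualMap).mkQ) :=
    rTensor_exact M (LinearMap.exact_map_mkQ_range _) (Submodule.mkQ_surjective _)
  refine hrow.of_ladder_linearEquiv_of_exact (e₁ := dualTensorHomEquiv R F₀ M)
    (e₂ := dualTensorHomEquiv R F₁ M) (e₃ := LinearEquiv.refl R _) ?_ ?_
  · exact (dualTensorHom_comp_rTensor_dualMap d).symm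
  · ext x
    simp [homToTransposeTensor]

end Transpose

lemma Function.Exact.surjective_iff_injective {K₂ K₃ C₁ C₂ : Type u}
    [AddCommGroup K₂] [Module R K₂] [AddCommGroup K₃] [Module R K₃]
    [AddCommGroup C₁] [Module R C₁] [AddCommGroup C₂] [Module R C₂]
    {F : K₂ →ₗ[R] K₃} {δ : K₃ →ₗ[R] C₁} {G : C₁ →ₗ[R] C₂} (hF : Exact F δ) (hG : Exact δ G) :
    Surjective F ↔ Injective G := by
  rw [← range_eq_top, ← ker_eq_bot, ← hF.linearMap_ker_eq, hG.linearMap_ker_eq, ker_eq_top,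
    range_eq_bot]

section Presentation

variable {F₀ F₁ U : Type u} [AddCommGroup F₀] [Module R F₀] [AddCommGroup F₁]
  [Module R F₁] [AddCommGroup U] [Module R U]
  [Module.Finite R F₀] [Module.Projective R F₀] [Module.Finite R F₁] [Module.Projective R F₁]
  {d : F₁ →ₗ[R] F₀} {p : F₀ →ₗ[R] U}

theorem surjective_compRight_iff_injective_lTensor_auslanderTranspose (hp : Surjective p)
    (hdp : Exact d p) {A B C : Type u} [AddCommGroup A] [Module R A] [AddCommGroup B]
    [Module R B] [AddCommGroup C] [Module R C] {f : A →ₗ[R] B} {g : B →ₗ[R] C}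
    (hf : Injective f) (hg : Surjective g) (hfg : Exact f g) :
    Surjective (g.compRight (M := U) R) ↔ Injective (lTensor (AuslanderTranspose d) f) := by
  have hhom (M : Type u) [AddCommGroup M] [Module R M] : Exact (lcomp R M p) (lcomp R M d) :=
    exact_lcomp_of_exact_of_surjective M hdp hp
  -- Snake lemma for the map `lcomp d` from `Hom(F₀, -)` to `Hom(F₁, -)` of the sequence
  -- `0 → A → B → C → 0`: its kernels are `Hom(U, -)` and its cokernels `T ⊗ -`.
  refine Exact.surjective_iff_injective
    (SnakeLemma.exact_δ'_right (i₁ := lcomp R A d) (i₂ := lcomp R B d) (i₃ := lcomp R C d)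
      (f₁ := f.compRight R) (f₂ := g.compRight R)
      (hf := exact_compRight_of_exact_of_injective F₀ hfg hf)
      (g₁ := f.compRight R) (g₂ := g.compRight R)
      (hg := exact_compRight_of_exact_of_injective F₁ hfg hf) (h₁ := rfl) (h₂ := rfl)
      (ι₂ := lcomp R B p) (hι₂ := hhom B) (ι₃ := lcomp R C p) (hι₃ := hhom C)
      (π₁ := homToTransposeTensor d A) (hπ₁ := exact_lcomp_homToTransposeTensor d A)
      (hf₂ := fun φ => Module.projective_lifting_property g φ hg)
      (hg₁ := hf.injective_linearMapComp_left)
      (F := g.compRight R) (hF := rfl) (h := lcomp_injective_of_surjective p hp))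
    (SnakeLemma.exact_δ'_left _ _ _ _ _ _ _ _ _ _ _ _ _ _ _ _
      (exact_lcomp_homToTransposeTensor d B) _ _ _ (lTensor_comp_homToTransposeTensor d f)
      (homToTransposeTensor_surjective d A))

end Presentation

theorem Module.FinitePresentation.exists_surjective_compRight_iff_injective_lTensor
    (U : Type u) [AddCommGroup U] [Module R U] [Module.FinitePresentation R U] :
    ∃ (T : Type u) (_ : AddCommGroup T) (_ : Module R T),
      ∀ ⦃A B C : Type u⦄ [AddCommGroup A] [Module R A] [AddCommGroup B] [Module R B]
        [AddCommGroup C] [Module R C] (f : A →ₗ[R] B) (g : B →ₗ[R] C),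
        Function.Injective f → Surjective g → Exact f g →
          (Surjective (g.compRight (M := U) R) ↔ Function.Injective (lTensor T f)) := by
  obtain ⟨n, m, p, d, hp, hdp⟩ := Module.FinitePresentation.exists_fin' R U
  exact ⟨AuslanderTranspose d, inferInstance, inferInstance, fun _ _ _ _ _ _ _ _ _ _ _ hf hg hfg =>
    surjective_compRight_iff_injective_lTensor_auslanderTranspose hp hdp hf hg hfg⟩

section SPure

variable {S : Set (ModuleCat.{u} R)}

lemma isSPureProjective_of_mem {U : ModuleCat.{u} R} (hU : U ∈ S) : IsSPureProjective S U :=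
  fun _ _ _ _ _ _ _ _ _ _ _ hX => hX.2.2.2 U hU

lemma IsSPureFlat.isSPureInjective_characterModule {F : Type u} [AddCommGroup F] [Module R F]
    (hF : IsSPureFlat S F) : IsSPureInjective S (CharacterModule F) :=
  fun _ _ _ _ _ _ _ _ _ f g hX =>
    rTensor_injective_iff_lcomp_surjective.mp ((lTensor_inj_iff_rTensor_inj F f).mp (hF f g hX))

variable {X₁ X₂ X₃ : Type u} [AddCommGroup X₁] [Module R X₁] [AddCommGroup X₂] [Module R X₂]
  [AddCommGroup X₃] [Module R X₃] {f : X₁ →ₗ[R] X₂} {g : X₂ →ₗ[R] X₃}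

lemma spureLift_of_forall_isSPureFlat (hfp : ∀ U ∈ S, Module.FinitePresentation R U)
    (hf : Injective f) (hg : Surjective g) (hfg : Exact f g)
    (H : ∀ (F : Type u) [AddCommGroup F] [Module R F], IsSPureFlat S F → Injective (lTensor F f)) :
    SPureLift S g := by
  intro U hU
  have := hfp U hU
  obtain ⟨T, _, _, hT⟩ :=
    Module.FinitePresentation.exists_surjective_compRight_iff_injective_lTensor (R := R) U
  have hTflat : IsSPureFlat S T := fun _ _ _ _ _ _ _ _ _ f' g' hX =>
    (hT f' g' hX.1 hX.2.1 hX.2.2.1).mp (hX.2.2.2 U hU)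
  exact (hT f g hf hg hfg).mpr (H T hTflat)

lemma spureLift_of_forall_isSPureInjective (hfp : ∀ U ∈ S, Module.FinitePresentation R U)
    (hf : Injective f) (hg : Surjective g) (hfg : Exact f g)
    (H : ∀ (E : Type u) [AddCommGroup E] [Module R E], IsSPureInjective S E →
      Surjective (lcomp R E f)) :
    SPureLift S g :=
  spureLift_of_forall_isSPureFlat hfp hf hg hfg fun F _ _ hF =>
    (lTensor_inj_iff_rTensor_inj F f).mpr
      (rTensor_injective_iff_lcomp_surjective.mpr (H _ hF.isSPureInjective_characterModule))

end SPure

end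

/-- an exact sequence `X : 0 → X₁ → X₂ → X₃ → 0` is `S`-pure iff `Hom(P, X)`
is exact for all `S`-pure projective `P`, iff `Hom(X, E)` is exact for all `S`-pure
injective `E`, iff `F ⊗ X` is exact for all `S`-pure flat `F`. -/
theorem stmt8 [CommRing R] (S : Set (ModuleCat.{u} R))
    (hfp : ∀ U ∈ S, Module.FinitePresentation R U)
    {X₁ X₂ X₃ : Type u} [AddCommGroup X₁] [Module R X₁] [AddCommGroup X₂] [Module R X₂]
    [AddCommGroup X₃] [Module R X₃] (f : X₁ →ₗ[R] X₂) (g : X₂ →ₗ[R] X₃)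
    (hf : Function.Injective f) (hg : Function.Surjective g) (hfg : Function.Exact f g) :
    (SPureLift S g ↔
      ∀ (P : Type u) [AddCommGroup P] [Module R P], IsSPureProjective S P →
        (Function.Injective (fun h : P →ₗ[R] X₁ => f ∘ₗ h) ∧
         Function.Exact (fun h : P →ₗ[R] X₁ => f ∘ₗ h) (fun h : P →ₗ[R] X₂ => g ∘ₗ h) ∧
         Function.Surjective (fun h : P →ₗ[R] X₂ => g ∘ₗ h))) ∧
    (SPureLift S g ↔
      ∀ (E : Type u) [AddCommGroup E] [Module R E], IsSPureInjective S E →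
        (Function.Injective (fun h : X₃ →ₗ[R] E => h ∘ₗ g) ∧
         Function.Exact (fun h : X₃ →ₗ[R] E => h ∘ₗ g) (fun h : X₂ →ₗ[R] E => h ∘ₗ f) ∧
         Function.Surjective (fun h : X₂ →ₗ[R] E => h ∘ₗ f))) ∧
    (SPureLift S g ↔
      ∀ (F : Type u) [AddCommGroup F] [Module R F], IsSPureFlat S F →
        (Function.Injective (LinearMap.lTensor F f) ∧
         Function.Exact (LinearMap.lTensor F f) (LinearMap.lTensor F g) ∧
         Function.Surjective (LinearMap.lTensor F g))) := by
  refine ⟨⟨fun hpure P _ _ hP => ?_, fun H U hU => (H U (isSPureProjective_of_mem hU)).2.2⟩,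
    ⟨fun hpure E _ _ hE => ?_,
      fun H => spureLift_of_forall_isSPureInjective hfp hf hg hfg fun E _ _ hE => (H E hE).2.2⟩,
    ⟨fun hpure F _ _ hF => ?_,
      fun H => spureLift_of_forall_isSPureFlat hfp hf hg hfg fun F _ _ hF => (H F hF).1⟩⟩
  · exact ⟨hf.injective_linearMapComp_left, exact_compRight_of_exact_of_injective P hfg hf,
      hP f g ⟨hf, hg, hfg, hpure⟩⟩
  · exact ⟨hg.injective_linearMapComp_right, exact_lcomp_of_exact_of_surjective E hfg hg,
      hE f g ⟨hf, hg, hfg, hpure⟩⟩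
  · exact ⟨hF f g ⟨hf, hg, hfg, hpure⟩, lTensor_exact F hfg hg, lTensor_surjective F hg⟩
end

section
/- If R is commutative, S is a set-presentable class of finitely presented R-modules containing R, and S ⊆ tr(S), then every S-pure projective R-module is S-pure flat. -/
/-!
Every `U ∈ S` is isomorphic to `tr V = (Fin k → R) ⧸ ⟨columns of m⟩` for some `V ∈ S` presented
as `(Fin n → R) ⧸ ⟨rows of m⟩`; these quotients form a set, so the maps from them to an
`S`-pure projective `P` assemble into an `S`-pure epimorphism `⨁ tr V → P` (onto since
`R ∈ S`), which splits.
Tensoring commutes with direct sums and retracts, so it remains to see that each such `tr V`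
is `S`-pure flat. Identifying `(Fin k → R) ⊗ X` with `Hom(Fin k → R, X)`, the module
`tr V ⊗ X` becomes the cokernel of precomposition `Hom(Fin n → R, X) → Hom(Fin k → R, X)`
with the matrix `m`; injectivity of `tr V ⊗ A → tr V ⊗ B` then says that a map on `Fin k → R`
which factors through `m` after composing with `A → B` already factors through `m` in `A`.
That is what lifting maps `V → C` along `B → C` provides.
-/

open Function LinearMap

universe u

variable {R : Type u}

open TensorProduct

section Presentations

variable [Ring R] {F' F V A B C : Type*} [AddCommGroup F'] [Module R F'] [AddCommGroup F]
  [Module R F] [AddCommGroup V] [Module R V] [AddCommGroup A] [Module R A] [AddCommGroup B]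
  [Module R B] [AddCommGroup C] [Module R C]

theorem Function.Exact.exists_comp_eq_of_comp_eq_zero {μ : F' →ₗ[R] F} {π : F →ₗ[R] V}
    (hμπ : Exact μ π) (hπ : Surjective π) {h : F →ₗ[R] C} (hh : h ∘ₗ μ = 0) :
    ∃ h' : V →ₗ[R] C, h' ∘ₗ π = h := by
  refine ⟨(range μ).liftQ h ?_ ∘ₗ (hμπ.linearEquivOfSurjective hπ).symm.toLinearMap, ?_⟩
  · rintro _ ⟨x, rfl⟩
    exact LinearMap.congr_fun hh x
  · ext x
    simp

theorem Function.Exact.exists_comp_eq_of_projective [Module.Projective R F] {f : A →ₗ[R] B}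
    {g : B →ₗ[R] C} (hfg : Exact f g) {d : F →ₗ[R] B} (hd : g ∘ₗ d = 0) :
    ∃ a : F →ₗ[R] A, f ∘ₗ a = d := by
  have hle : ∀ x, d x ∈ range f := fun x => hfg.linearMap_ker_eq ▸ LinearMap.congr_fun hd x
  obtain ⟨a, ha⟩ := Module.projective_lifting_property f.rangeRestrict (d.codRestrict _ hle)
    f.surjective_rangeRestrict
  exact ⟨a, LinearMap.ext fun x => congrArg Subtype.val (LinearMap.congr_fun ha x)⟩

theorem exists_eq_comp_of_lift [Module.Projective R F] {μ : F' →ₗ[R] F} {π : F →ₗ[R] V}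
    (hμπ : Exact μ π) (hπ : Surjective π) {f : A →ₗ[R] B} {g : B →ₗ[R] C} (hf : Injective f)
    (hfg : Exact f g) (hlift : ∀ h : V →ₗ[R] C, ∃ h' : V →ₗ[R] B, g ∘ₗ h' = h)
    {a : F' →ₗ[R] A} {b : F →ₗ[R] B} (hab : f ∘ₗ a = b ∘ₗ μ) :
    ∃ a' : F →ₗ[R] A, a = a' ∘ₗ μ := by
  obtain ⟨h, hh⟩ := hμπ.exists_comp_eq_of_comp_eq_zero hπ (h := g ∘ₗ b) (by
    rw [LinearMap.comp_assoc, ← hab, ← LinearMap.comp_assoc, hfg.linearMap_comp_eq_zero,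
      zero_comp])
  obtain ⟨h', hh'⟩ := hlift h
  obtain ⟨a', ha'⟩ := hfg.exists_comp_eq_of_projective (d := b - h' ∘ₗ π) (by
    rw [comp_sub, ← LinearMap.comp_assoc, hh', hh, sub_self])
  refine ⟨a', (cancel_left hf).mp ?_⟩
  rw [← LinearMap.comp_assoc, ha', sub_comp, LinearMap.comp_assoc, hμπ.linearMap_comp_eq_zero,
    comp_zero, sub_zero, hab]

end Presentations

section Tensor

variable [CommRing R] {ι κ : Type*} [Fintype ι] [DecidableEq ι] [Fintype κ] [DecidableEq κ]
  {X A B : Type*} [AddCommGroup X] [Module R X] [AddCommGroup A] [Module R A] [AddCommGroup B]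
  [Module R B]

/-- The dot product identifies `ι → R` with its dual. -/
noncomputable def tensorEquivHom (ι : Type*) [Fintype ι] [DecidableEq ι] (X : Type*)
    [AddCommGroup X] [Module R X] : (ι → R) ⊗[R] X ≃ₗ[R] ((ι → R) →ₗ[R] X) :=
  TensorProduct.comm R _ X ≪≫ₗ piScalarRight R R X ι ≪≫ₗ (LinearEquiv.piRing R X ι R).symm

@[simp]
lemma tensorEquivHom_tmul (x : ι → R) (a : X) (y : ι → R) :
    tensorEquivHom ι X (x ⊗ₜ a) y = (∑ i, y i * x i) • a := by
  simp [tensorEquivHom, Finset.sum_smul, mul_smul]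

lemma tensorEquivHom_lTensor (f : A →ₗ[R] B) (w : (ι → R) ⊗[R] A) :
    tensorEquivHom ι B (f.lTensor _ w) = f ∘ₗ tensorEquivHom ι A w := by
  induction w using TensorProduct.induction_on with
  | zero => ext; simp
  | tmul x a => ext; simp
  | add w w' hw hw' => simp [hw, hw', comp_add]

lemma tensorEquivHom_rTensor (m : ι → κ → R) (z : (κ → R) ⊗[R] X) :
    tensorEquivHom ι X ((Fintype.linearCombination R fun j i => m i j).rTensor X z) =
      tensorEquivHom κ X z ∘ₗ Fintype.linearCombination R m := by
  induction z using TensorProduct.induction_on with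
  | zero => ext; simp
  | tmul x a => ext i; simp [Fintype.linearCombination_apply, Pi.single_apply, mul_comm]
  | add w w' hw hw' => simp [hw, hw', add_comp]

theorem injective_lTensor_quotient_range {M' M : Type*} [AddCommGroup M'] [Module R M']
    [AddCommGroup M] [Module R M] (t : M' →ₗ[R] M) (f : A →ₗ[R] B)
    (h : ∀ w z, f.lTensor M w = t.rTensor B z → w ∈ range (t.rTensor A)) :
    Injective (f.lTensor (M ⧸ range t)) := by
  have hexactA := rTensor_exact A (exact_map_mkQ_range t) (range t).mkQ_surjective
  have hexactB := rTensor_exact B (exact_map_mkQ_range t) (range t).mkQ_surjective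
  rw [injective_iff_map_eq_zero]
  intro x hx
  obtain ⟨w, rfl⟩ := rTensor_surjective A (range t).mkQ_surjective x
  have hcomm :
      f.lTensor _ ((range t).mkQ.rTensor A w) = (range t).mkQ.rTensor B (f.lTensor M w) := by
    rw [← LinearMap.comp_apply (f.lTensor _), lTensor_comp_rTensor, ← rTensor_comp_lTensor,
      LinearMap.comp_apply]
  obtain ⟨z, hz⟩ := (hexactB _).mp (hcomm ▸ hx)
  obtain ⟨w', rfl⟩ := h w z hz.symm
  exact hexactA.apply_apply_eq_zero w'

theorem injective_lTensor_transpose {k n : ℕ} (m : Fin k → Fin n → R) {V C : Type*}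
    [AddCommGroup V] [Module R V] [AddCommGroup C] [Module R C] {π : (Fin n → R) →ₗ[R] V}
    (hπ : Surjective π) (hker : ker π = Submodule.span R (Set.range m)) {f : A →ₗ[R] B}
    {g : B →ₗ[R] C} (hf : Injective f) (hfg : Exact f g)
    (hlift : ∀ h : V →ₗ[R] C, ∃ h' : V →ₗ[R] B, g ∘ₗ h' = h) :
    Injective (f.lTensor
      ((Fin k → R) ⧸ Submodule.span R (Set.range fun j : Fin n => fun i : Fin k => m i j))) := by
  have hμπ : Exact (Fintype.linearCombination R m) π := by
    rw [exact_iff, hker, Fintype.range_linearCombination]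
  rw [← Fintype.range_linearCombination]
  refine injective_lTensor_quotient_range _ f fun w z hwz => ?_
  obtain ⟨a', ha'⟩ := exists_eq_comp_of_lift hμπ hπ hf hfg hlift
    (a := tensorEquivHom _ A w) (b := tensorEquivHom _ B z)
    (by rw [← tensorEquivHom_lTensor, hwz, tensorEquivHom_rTensor])
  refine ⟨(tensorEquivHom _ A).symm a', (tensorEquivHom _ A).injective ?_⟩
  rw [tensorEquivHom_rTensor, LinearEquiv.apply_symm_apply, ha']

end Tensor

section Purity

variable [Ring R] {S : Set (ModuleCat.{u} R)}

theorem SPureLift.surjective (hR : ModuleCat.of R R ∈ S) {B C : Type u}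
    [AddCommGroup B] [Module R B] [AddCommGroup C] [Module R C] {g : B →ₗ[R] C}
    (hg : SPureLift S g) : Surjective g := by
  intro c
  obtain ⟨h, hh⟩ := hg (ModuleCat.of R R) hR (toSpanSingleton R C c)
  exact ⟨h (1 : R), by simpa using LinearMap.congr_fun hh (1 : R)⟩

theorem sPureLift_toModule {ι : Type u} [DecidableEq ι] {M : ι → Type u}
    [∀ i, AddCommGroup (M i)] [∀ i, Module R (M i)] {P : Type u} [AddCommGroup P] [Module R P]
    (φ : ∀ i, M i →ₗ[R] P)
    (hφ : ∀ U ∈ S, ∀ h : U →ₗ[R] P, ∃ (i : ι) (ψ : U →ₗ[R] M i), φ i ∘ₗ ψ = h) :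
    SPureLift S (DirectSum.toModule R ι P φ) := by
  intro U hU h
  obtain ⟨i, ψ, rfl⟩ := hφ U hU h
  exact ⟨DirectSum.lof R ι M i ∘ₗ ψ, LinearMap.ext fun x => DirectSum.toModule_lof R i (ψ x)⟩

theorem IsSPureProjective.exists_rightInverse {P B : Type u} [AddCommGroup P]
    [Module R P] [AddCommGroup B] [Module R B] (hP : IsSPureProjective S P) {g : B →ₗ[R] P}
    (hg : SPureLift S g) (hsurj : Surjective g) : ∃ σ : P →ₗ[R] B, g ∘ₗ σ = LinearMap.id :=
  hP (ker g).subtype g ⟨(ker g).injective_subtype, hsurj, exact_subtype_ker_map g, hg⟩ _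

end Purity

section Flatness

variable [CommRing R] {S : Set (ModuleCat.{u} R)}

theorem IsSPureFlat.of_retract {P Q : Type u} [AddCommGroup P] [Module R P]
    [AddCommGroup Q] [Module R Q] (hQ : IsSPureFlat S Q) (σ : P →ₗ[R] Q) (p : Q →ₗ[R] P)
    (hpσ : p ∘ₗ σ = LinearMap.id) : IsSPureFlat S P := by
  intro A B C _ _ _ _ _ _ f g hfg
  have hσ : Injective (σ.rTensor A) := by
    refine LeftInverse.injective (g := p.rTensor A) fun x => ?_
    rw [← LinearMap.comp_apply (p.rTensor A), ← rTensor_comp, hpσ, rTensor_id, id_apply]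
  refine Injective.of_comp (f := σ.rTensor B) ?_
  rw [← coe_comp, rTensor_comp_lTensor, ← lTensor_comp_rTensor, coe_comp]
  exact (hQ f g hfg).comp hσ

theorem IsSPureFlat.directSum {ι : Type u} [DecidableEq ι] {M : ι → Type u}
    [∀ i, AddCommGroup (M i)] [∀ i, Module R (M i)] (hM : ∀ i, IsSPureFlat S (M i)) :
    IsSPureFlat S (DirectSum ι M) := by
  intro A B C _ _ _ _ _ _ f g hfg
  rw [lTensor_inj_iff_rTensor_inj, ← EquivLike.comp_injective _ (directSumRight R R B M),
    ← LinearEquiv.coe_coe, ← coe_comp, directSumRight_comp_rTensor, coe_comp,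
    LinearEquiv.coe_coe, EquivLike.injective_comp, DirectSum.lmap_injective]
  exact fun i => (lTensor_inj_iff_rTensor_inj _ f).mp (hM i f g hfg)

end Flatness

section Transpose

variable [CommRing R]

/-- The Auslander transpose of `(Fin n → R) ⧸ ⟨rows of m⟩`, for `d = ⟨k, n, m⟩`. -/
abbrev transposeModule (d : Σ k n : ℕ, Fin k → Fin n → R) : Type u :=
  (Fin d.1 → R) ⧸ Submodule.span R (Set.range fun j : Fin d.2.1 => fun i : Fin d.1 => d.2.2 i j)

def PresentsMemberOf (S : Set (ModuleCat.{u} R)) (d : Σ k n : ℕ, Fin k → Fin n → R) : Prop :=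
  ∃ V ∈ S, ∃ π : (Fin d.2.1 → R) →ₗ[R] V,
    Surjective π ∧ ker π = Submodule.span R (Set.range d.2.2)

theorem isSPureFlat_transposeModule {S : Set (ModuleCat.{u} R)} {d : Σ k n : ℕ, Fin k → Fin n → R}
    (hd : PresentsMemberOf S d) : IsSPureFlat S (transposeModule d) := by
  obtain ⟨V, hV, π, hπ, hker⟩ := hd
  exact fun A B C _ _ _ _ _ _ f g hfg =>
    injective_lTensor_transpose d.2.2 hπ hker hfg.1 hfg.2.2.1 (hfg.2.2.2 V hV)

end Transpose

theorem stmt9_general [CommRing R] (S : Set (ModuleCat.{u} R))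
    (hR : ModuleCat.of R R ∈ S)
    (htr : ∀ U ∈ S, ∃ V ∈ S, ∃ (k n : ℕ) (m : Fin k → (Fin n → R))
        (π : (Fin n → R) →ₗ[R] V),
      Function.Surjective π ∧ LinearMap.ker π = Submodule.span R (Set.range m) ∧
      Nonempty ((U : Type u) ≃ₗ[R] ((Fin k → R) ⧸ Submodule.span R (Set.range fun j : Fin n => fun i : Fin k => m i j)))) :
    ∀ (P : Type u) [AddCommGroup P] [Module R P],
      IsSPureProjective S P → IsSPureFlat S P := by
  classical
  intro P _ _ hP
  let ι := Σ d : {d // PresentsMemberOf S d}, (transposeModule d.1 →ₗ[R] P)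
  have hcover : ∀ U ∈ S, ∀ h : U →ₗ[R] P,
      ∃ (i : ι) (ψ : U →ₗ[R] transposeModule i.1.1), i.2 ∘ₗ ψ = h := by
    intro U hU h
    obtain ⟨V, hV, k, n, m, π, hπ, hker, ⟨e⟩⟩ := htr U hU
    exact ⟨⟨⟨⟨k, n, m⟩, V, hV, π, hπ, hker⟩, h ∘ₗ e.symm⟩, e, by ext; simp⟩
  have hlift :=
    sPureLift_toModule (M := fun i : ι => transposeModule i.1.1) (fun i => i.2) hcover
  obtain ⟨σ, hσ⟩ := hP.exists_rightInverse hlift (hlift.surjective hR)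
  exact (IsSPureFlat.directSum fun i => isSPureFlat_transposeModule i.1.2).of_retract σ _ hσ

/-- if `R` is commutative, `S` is a (set-presentable) class of finitely
presented modules containing `R` with `S ⊆ tr S`, then every `S`-pure projective module
is `S`-pure flat. -/
theorem stmt9 [CommRing R] (S : Set (ModuleCat.{u} R))
    (hR : ModuleCat.of R R ∈ S) (hfp : ∀ U ∈ S, Module.FinitePresentation R U)
    (htr : ∀ U ∈ S, ∃ V ∈ S, ∃ (k n : ℕ) (m : Fin k → (Fin n → R))
        (π : (Fin n → R) →ₗ[R] V),
      Function.Surjective π ∧ LinearMap.ker π = Submodule.span R (Set.range m) ∧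
      Nonempty ((U : Type u) ≃ₗ[R] ((Fin k → R) ⧸ Submodule.span R (Set.range fun j : Fin n => fun i : Fin k => m i j)))) :
    ∀ (P : Type u) [AddCommGroup P] [Module R P],
      IsSPureProjective S P → IsSPureFlat S P :=
  stmt9_general S hR htr
end

section
/- If N is an S-pure submodule of an R-module M, then there exists a submodule K of M such that K ∩ N = 0 and M/K is an S-pure essential extension of (K + N)/K. -/
open Function LinearMap

universe u

variable {R : Type u}

/-! Zorn's lemma gives `K` maximal among the submodules with `K ⊓ N = ⊥` and `(K ⊔ N)/K`
`S`-pure in `M/K`. Chains have upper bounds because a map from a finitely presented module to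
`M/(sSup c ⊔ N)` already factors through `M/F` for a finitely generated `F ≤ sSup c ⊔ N`, hence
through `M/(K ⊔ N)` for a single member `K` of the chain. If `φ : M/K → L` restricts to an
`S`-pure monomorphism on `(K ⊔ N)/K`, the kernel of `M → L` is again such a submodule and
contains `K`, so it equals `K` by maximality: `φ` is injective. -/

open Submodule

section Quotients

variable [Ring R] {M : Type*} [AddCommGroup M] [Module R M]

theorem Submodule.map_mkQ_sup_of_le {K K' : Submodule R M} (N : Submodule R M) (h : K ≤ K') :
    (K ⊔ N).map K'.mkQ = (K' ⊔ N).map K'.mkQ := by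
  rw [map_sup, map_sup, mkQ_map_self, le_bot_iff.mp ((map_mono h).trans (mkQ_map_self K').le)]

theorem Submodule.FG.exists_le_sup_of_le_sSup_sup {F N : Submodule R M} (hF : F.FG)
    {c : Set (Submodule R M)} (hc : DirectedOn (· ≤ ·) c) (hne : c.Nonempty)
    (hle : F ≤ sSup c ⊔ N) :
    ∃ K ∈ c, F ≤ K ⊔ N := by
  have hsup : sSup c ⊔ N = sSup ((· ⊔ N) '' c) := by
    rw [sSup_image, sSup_eq_iSup, biSup_sup hne]
  obtain ⟨_, ⟨K, hK, rfl⟩, hFK⟩ :=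
    (CompleteLattice.isCompactElement_iff_le_of_directed_sSup_le _ F).mp
      ((fg_iff_compact F).mp hF) _ (hne.image _)
      (directedOn_image.mpr (hc.mono' fun _ _ _ _ h ↦ sup_le_sup_right h N))
      (hsup ▸ hle)
  exact ⟨K, hK, hFK⟩

theorem Module.FinitePresentation.exists_fg_le_factor_comp {U : Type*} [AddCommGroup U]
    [Module R U] [Module.FinitePresentation R U] {Q : Submodule R M} (h : U →ₗ[R] M ⧸ Q) :
    ∃ (F : Submodule R M) (hFQ : F ≤ Q), F.FG ∧ ∃ g : U →ₗ[R] M ⧸ F, F.factor hFQ ∘ₗ g = h := by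
  obtain ⟨n, K₀, e, hK₀⟩ := Module.FinitePresentation.exists_fin R U
  obtain ⟨f, hf⟩ := Module.projective_lifting_property Q.mkQ
    (h ∘ₗ e.symm.toLinearMap ∘ₗ K₀.mkQ) Q.mkQ_surjective
  have hle : K₀.map f ≤ Q := by
    rintro _ ⟨z, hz, rfl⟩
    rw [← ker_mkQ Q, mem_ker, ← LinearMap.comp_apply, hf]
    simp [(Quotient.mk_eq_zero K₀).mpr hz]
  have hfactor : (K₀.map f).factor hle ∘ₗ K₀.mapQ _ f (le_comap_map f K₀) =
      h ∘ₗ e.symm.toLinearMap := by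
    refine linearMap_qext _ ?_
    rw [LinearMap.comp_assoc, mapQ_mkQ, ← LinearMap.comp_assoc, factor_comp_mk, hf,
      LinearMap.comp_assoc]
  refine ⟨K₀.map f, hle, hK₀.map f, K₀.mapQ _ f (le_comap_map f K₀) ∘ₗ e.toLinearMap, ?_⟩
  rw [← LinearMap.comp_assoc, hfactor, LinearMap.comp_assoc, e.symm_comp, LinearMap.comp_id]

end Quotients

section SPurity

variable [Ring R] (S : Set (ModuleCat.{u} R)) {M : Type u} [AddCommGroup M] [Module R M]

theorem SPureLift.of_comp {A B C : Type u} [AddCommGroup A] [Module R A] [AddCommGroup B]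
    [Module R B] [AddCommGroup C] [Module R C] {f : B →ₗ[R] C} {g : A →ₗ[R] B}
    (h : SPureLift S (f ∘ₗ g)) : SPureLift S f := fun U hU k ↦
  let ⟨k', hk'⟩ := h U hU k
  ⟨g ∘ₗ k', by rw [← LinearMap.comp_assoc, hk']⟩

theorem sPureLift_linearEquiv_comp_iff {B C D : Type u} [AddCommGroup B] [Module R B]
    [AddCommGroup C] [Module R C] [AddCommGroup D] [Module R D] (e : C ≃ₗ[R] D)
    (g : B →ₗ[R] C) : SPureLift S (e.toLinearMap ∘ₗ g) ↔ SPureLift S g := by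
  refine ⟨fun h U hU k ↦ ?_, fun h U hU k ↦ ?_⟩
  · obtain ⟨k', hk'⟩ := h U hU (e.toLinearMap ∘ₗ k)
    exact ⟨k', LinearMap.ext fun u ↦ e.injective (LinearMap.congr_fun hk' u)⟩
  · obtain ⟨k', hk'⟩ := h U hU (e.symm.toLinearMap ∘ₗ k)
    exact ⟨k', by
      rw [LinearMap.comp_assoc, hk', ← LinearMap.comp_assoc, e.comp_symm, LinearMap.id_comp]⟩

theorem isSPureSubmodule_map_mkQ_iff {P Q : Submodule R M} (hPQ : P ≤ Q) :
    IsSPureSubmodule S (Q.map P.mkQ) ↔ SPureLift S (P.factor hPQ) := by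
  have : (quotientQuotientEquivQuotient P Q hPQ).toLinearMap ∘ₗ (Q.map P.mkQ).mkQ =
      P.factor hPQ := by
    ext; rfl
  rw [IsSPureSubmodule, ← sPureLift_linearEquiv_comp_iff S (quotientQuotientEquivQuotient P Q hPQ),
    this]

theorem IsSPureSubmodule.of_map_injective {L : Type u} [AddCommGroup L] [Module R L]
    {ψ : M →ₗ[R] L} (hψ : Injective ψ) {P : Submodule R M}
    (hP : IsSPureSubmodule S (P.map ψ)) : IsSPureSubmodule S P := by
  intro U hU h
  let ψbar := P.mapQ (P.map ψ) ψ (le_comap_map ψ P)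
  have hψbar : Injective ψbar := by
    rw [← ker_eq_bot, ker_mapQ, comap_map_eq_of_injective hψ, mkQ_map_self]
  obtain ⟨g, hg⟩ := hP U hU (ψbar ∘ₗ h)
  have hg_mem : ∀ u, g u ∈ range ψ := fun u ↦ by
    obtain ⟨a, ha⟩ := P.mkQ_surjective (h u)
    have hga : g u - ψ a ∈ P.map ψ := (Submodule.Quotient.eq _).mp <| by
      rw [← mkQ_apply, ← LinearMap.comp_apply, hg, LinearMap.comp_apply, ← ha]; rfl
    simpa using add_mem (map_le_range hga) (mem_range_self ψ a)
  refine ⟨(LinearEquiv.ofInjective ψ hψ).symm.toLinearMap ∘ₗ g.codRestrict _ hg_mem, ?_⟩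
  ext u
  refine hψbar ?_
  rw [← LinearMap.comp_apply ψbar h, ← hg]
  simp [ψbar]

theorem IsSPureSubmodule.map_mkQ_ker {L : Type u} [AddCommGroup L] [Module R L]
    (Φ : M →ₗ[R] L) {P : Submodule R M} (hP : IsSPureSubmodule S (P.map Φ)) :
    IsSPureSubmodule S (P.map (ker Φ).mkQ) :=
  .of_map_injective S (ker_eq_bot.mp (ker_liftQ_eq_bot' _ Φ rfl))
    (by rwa [← map_comp, liftQ_mkQ])

end SPurity

section Avoiding

variable [Ring R] (S : Set (ModuleCat.{u} R)) {M : Type u} [AddCommGroup M] [Module R M]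
  (N : Submodule R M)

def IsSPureAvoiding (K : Submodule R M) : Prop :=
  K ⊓ N = ⊥ ∧ IsSPureSubmodule S ((K ⊔ N).map K.mkQ)

theorem isSPureAvoiding_bot (hN : IsSPureSubmodule S N) : IsSPureAvoiding S N ⊥ := by
  refine ⟨bot_inf_eq N, (isSPureSubmodule_map_mkQ_iff S le_sup_left).mpr
    (SPureLift.of_comp S (g := (⊥ : Submodule R M).mkQ) ?_)⟩
  rwa [factor_comp_mk, bot_sup_eq]

theorem isSPureAvoiding_sSup (hfp : ∀ U ∈ S, Module.FinitePresentation R U)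
    {c : Set (Submodule R M)} (hc : ∀ K ∈ c, IsSPureAvoiding S N K)
    (hchain : IsChain (· ≤ ·) c) (hne : c.Nonempty) : IsSPureAvoiding S N (sSup c) := by
  have hdir := hchain.directedOn
  refine ⟨?_, (isSPureSubmodule_map_mkQ_iff S le_sup_left).mpr fun U hU h ↦ ?_⟩
  · rw [inf_comm, hdir.inf_sSup_eq]
    exact iSup₂_eq_bot.mpr fun K hK ↦ by rw [inf_comm, (hc K hK).1]
  have := hfp U hU
  obtain ⟨F, hF, hF_fg, g, rfl⟩ := Module.FinitePresentation.exists_fg_le_factor_comp h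
  obtain ⟨K, hK, hFK⟩ := hF_fg.exists_le_sup_of_le_sSup_sup hdir hne hF
  obtain ⟨g', hg'⟩ :=
    (isSPureSubmodule_map_mkQ_iff S le_sup_left).mp (hc K hK).2 U hU (F.factor hFK ∘ₗ g)
  refine ⟨K.factor (le_sSup hK) ∘ₗ g', ?_⟩
  rw [← LinearMap.comp_assoc, factor_comp,
    ← factor_comp le_sup_left (sup_le_sup_right (le_sSup hK) N), LinearMap.comp_assoc, hg',
    ← LinearMap.comp_assoc, factor_comp]

theorem Maximal.isSPureEssentialExtension {K : Submodule R M}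
    (hK : Maximal (IsSPureAvoiding S N) K) :
    IsSPureEssentialExtension S ((K ⊔ N).map K.mkQ) := by
  refine ⟨hK.prop.2, fun L _ _ φ hφ ↦ ?_⟩
  set K' := ker (φ ∘ₗ K.mkQ)
  have hKK' : K ≤ K' := fun x hx ↦ by simp [K', (Quotient.mk_eq_zero K).mpr hx]
  have hK' : IsSPureAvoiding S N K' := by
    refine ⟨eq_bot_iff.mpr ?_, ?_⟩
    · rintro x ⟨hxK', hxN⟩
      have hmem : K.mkQ x ∈ (K ⊔ N).map K.mkQ := mem_map_of_mem (mem_sup_right hxN)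
      have hx0 : (⟨_, hmem⟩ : (K ⊔ N).map K.mkQ) = 0 :=
        hφ.1 (by simpa using LinearMap.mem_ker.mp hxK')
      rw [← hK.prop.1]
      exact ⟨(Quotient.mk_eq_zero K).mp (congrArg Subtype.val hx0), hxN⟩
    · rw [← map_mkQ_sup_of_le N hKK']
      refine IsSPureSubmodule.map_mkQ_ker S _ ?_
      rw [map_comp, ← range_subtype ((K ⊔ N).map K.mkQ), ← range_comp]
      exact hφ.2
  have hK'K : K' = K := (hK.eq_of_le hK' hKK').symm
  rw [← ker_eq_bot, eq_bot_iff]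
  intro y hy
  obtain ⟨x, rfl⟩ := K.mkQ_surjective y
  have hx : x ∈ K' := hy
  rw [hK'K] at hx
  exact (mem_bot R).mpr ((Quotient.mk_eq_zero K).mpr hx)

end Avoiding

/-- if `N` is an `S`-pure submodule of `M`, there is `K ≤ M` with
`K ∩ N = 0` such that `M/K` is an `S`-pure essential extension of `(K + N)/K`. -/
theorem stmt13 [Ring R] (S : Set (ModuleCat.{u} R))
    (hfp : ∀ U ∈ S, Module.FinitePresentation R U)
    {M : Type u} [AddCommGroup M] [Module R M] (N : Submodule R M)
    (hN : IsSPureSubmodule S N) :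
    ∃ K : Submodule R M, K ⊓ N = ⊥ ∧
      IsSPureEssentialExtension S ((K ⊔ N).map K.mkQ) := by
  obtain ⟨K, -, hK⟩ := zorn_le_nonempty₀ {K | IsSPureAvoiding S N K}
    (fun c hc hchain K hK ↦ ⟨sSup c, isSPureAvoiding_sSup S N hfp hc hchain ⟨K, hK⟩,
      fun _ ↦ le_sSup⟩) ⊥ (isSPureAvoiding_bot S N hN)
  exact ⟨K, hK.prop.1, hK.isSPureEssentialExtension S N⟩
end

section
/- Let S be a set-presentable class of finitely presented left R-modules containing R. An R-module E is S-pure injective if and only if E has no proper S-pure essential extension. -/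
/-!
`S`-pure injectivity of `E` amounts to every `S`-pure monomorphism out of `E` splitting: pushing an
`S`-pure exact sequence `0 → A → B → C → 0` out along `A → E` gives an `S`-pure monomorphism
`E → P`, and a retraction of it extends `A → E` to `B`.

If `E` is `S`-pure injective and `E ⊆ L` is `S`-pure essential, a retraction `L → E` restricts to
the identity on `E`, so it is injective and `L = E`. Conversely, for an `S`-pure submodule `K ≅ E`
of `P`, Zorn's lemma gives `X` maximal with `X ∩ K = 0` and `(K + X)/X` `S`-pure in `P/X`; this
condition passes to unions of chains because the modules of `S` are finitely presented, and
maximality makes `P/X` an `S`-pure essential extension of `K`. So `P/X ≅ E`, and `P → P/X` is a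
retraction.
-/

open Function LinearMap

universe u

variable {R : Type u}

section Purity
variable [Ring R] {S : Set (ModuleCat.{u} R)}
  {M N Q : Type u} [AddCommGroup M] [Module R M] [AddCommGroup N] [Module R N]
  [AddCommGroup Q] [Module R Q]

lemma SPureLift.of_comp_s14 {g : N →ₗ[R] Q} {f : M →ₗ[R] N} (h : SPureLift S (g ∘ₗ f)) :
    SPureLift S g := fun U hU u ↦
  let ⟨v, hv⟩ := h U hU u
  ⟨f ∘ₗ v, by rw [← hv, LinearMap.comp_assoc]⟩

lemma sPureLift_equiv_comp_iff (e : N ≃ₗ[R] Q) {g : M →ₗ[R] N} :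
    SPureLift S (e.toLinearMap ∘ₗ g) ↔ SPureLift S g := by
  refine ⟨fun h U hU u ↦ ?_, fun h U hU u ↦ ?_⟩
  · obtain ⟨v, hv⟩ := h U hU (e.toLinearMap ∘ₗ u)
    exact ⟨v, by rwa [LinearMap.comp_assoc, e.comp_toLinearMap_eq_iff] at hv⟩
  · obtain ⟨v, hv⟩ := h U hU (e.symm.toLinearMap ∘ₗ u)
    exact ⟨v, by
      rw [LinearMap.comp_assoc, hv, ← LinearMap.comp_assoc, e.comp_symm, LinearMap.id_comp]⟩

lemma isSPureSubmodule_ker_iff {π : M →ₗ[R] N} (hπ : Surjective π) :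
    IsSPureSubmodule S (ker π) ↔ SPureLift S π := by
  have : (π.quotKerEquivOfSurjective hπ).toLinearMap ∘ₗ (ker π).mkQ = π := by ext; rfl
  rw [IsSPureSubmodule, ← sPureLift_equiv_comp_iff (π.quotKerEquivOfSurjective hπ), this]

lemma isSPureSubmodule_top : IsSPureSubmodule S (⊤ : Submodule R M) :=
  fun _ _ u ↦ ⟨0, ext fun x ↦ Subsingleton.elim _ (u x)⟩

lemma IsSPureSubmodule.of_map {ψ : M →ₗ[R] N} (hψ : Injective ψ) {K : Submodule R M}
    (h : IsSPureSubmodule S (K.map ψ)) : IsSPureSubmodule S K := by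
  set ψq := K.mapQ (K.map ψ) ψ (K.le_comap_map ψ)
  have hψq : Injective ψq := by
    rw [← ker_eq_bot, Submodule.ker_mapQ, Submodule.comap_map_eq_of_injective hψ,
      Submodule.mkQ_map_self]
  intro U hU u
  obtain ⟨v, hv⟩ := h U hU (ψq ∘ₗ u)
  have hv_mem : ∀ x, v x ∈ range ψ := fun x ↦ by
    obtain ⟨p, hp⟩ := K.mkQ_surjective (u x)
    have : (K.map ψ).mkQ (v x) = (K.map ψ).mkQ (ψ p) := by
      rw [← LinearMap.comp_apply, hv, LinearMap.comp_apply, ← hp]; rfl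
    obtain ⟨k, -, hk⟩ := (Submodule.Quotient.eq _).1 this
    exact ⟨k + p, by rw [map_add, hk, sub_add_cancel]⟩
  refine ⟨(LinearEquiv.ofInjective ψ hψ).symm.toLinearMap ∘ₗ codRestrict _ v hv_mem,
    ext fun x ↦ hψq ?_⟩
  have hψw : ψ ((LinearEquiv.ofInjective ψ hψ).symm ⟨v x, hv_mem x⟩) = v x :=
    LinearEquiv.ofInjective_symm_apply ..
  simpa [ψq, hψw] using LinearMap.congr_fun hv x

end Purity

section Pushout
variable [Ring R] {S : Set (ModuleCat.{u} R)} {A B C E : Type u} [AddCommGroup A] [Module R A]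
  [AddCommGroup B] [Module R B] [AddCommGroup C] [Module R C] [AddCommGroup E] [Module R E]

lemma IsSPureExact.exists_pushout {f : A →ₗ[R] B} {g : B →ₗ[R] C} (hfg : IsSPureExact S f g)
    (h : A →ₗ[R] E) :
    ∃ (P : Type u) (_ : AddCommGroup P) (_ : Module R P) (i : E →ₗ[R] P) (j : B →ₗ[R] P),
      IsSPureMono S i ∧ j ∘ₗ f = i ∘ₗ h := by
  obtain ⟨hf, hg, hexact, hpure⟩ := hfg
  set W := range (h.prod (-f))
  set i := W.mkQ ∘ₗ inl R E B
  set j := W.mkQ ∘ₗ inr R E B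
  have hW : ∀ e b, W.mkQ (e, b) = i e + j b := fun e b ↦ by
    simp only [i, j, LinearMap.comp_apply, ← map_add, inl_apply, inr_apply, Prod.mk_add_mk,
      add_zero, zero_add]
  have hji : j ∘ₗ f = i ∘ₗ h := by
    ext a
    simp only [i, j, LinearMap.comp_apply, inl_apply, inr_apply, Submodule.mkQ_apply,
      Submodule.Quotient.eq]
    exact ⟨-a, by simp⟩
  have hi : Injective i := by
    rw [← ker_eq_bot, eq_bot_iff]
    intro e he
    obtain ⟨a, ha⟩ := (Submodule.Quotient.mk_eq_zero W).1 he
    simp only [LinearMap.prod_apply, Function.prod_apply, LinearMap.neg_apply, inl_apply,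
      Prod.mk.injEq, neg_eq_zero] at ha
    rw [← ha.1, hf (ha.2.trans f.map_zero.symm), map_zero]
    exact zero_mem _
  set q := W.liftQ (g ∘ₗ snd R E B) (by rintro _ ⟨a, rfl⟩; simp [hexact.apply_apply_eq_zero])
  have hqj : q ∘ₗ j = g := by ext; simp [q, j]
  have hker : ker q = range i := by
    ext x
    obtain ⟨⟨e, b⟩, rfl⟩ := W.mkQ_surjective x
    refine ⟨fun hx ↦ ?_, ?_⟩
    · obtain ⟨a, rfl⟩ := (hexact b).1 (by simpa [q] using hx)
      refine ⟨e + h a, ?_⟩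
      rw [hW, map_add, ← LinearMap.comp_apply j f, hji]
      rfl
    · rintro ⟨e', he'⟩
      rw [mem_ker, ← he']
      simp [q, i]
  have hq : Surjective q := by
    intro c
    obtain ⟨b, rfl⟩ := hg c
    exact ⟨j b, by rw [← LinearMap.comp_apply, hqj]⟩
  refine ⟨_, _, _, i, j, ⟨hi, ?_⟩, hji⟩
  rw [← hker, isSPureSubmodule_ker_iff hq]
  exact SPureLift.of_comp_s14 (hqj ▸ hpure)

end Pushout

section Retraction
variable [Ring R] {S : Set (ModuleCat.{u} R)} {E L : Type u} [AddCommGroup E] [Module R E]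
  [AddCommGroup L] [Module R L]

lemma IsSPureInjective.exists_comp_eq_id (hE : IsSPureInjective S E) {ι : E →ₗ[R] L}
    (hι : IsSPureMono S ι) : ∃ π : L →ₗ[R] E, π ∘ₗ ι = LinearMap.id :=
  hE ι (range ι).mkQ ⟨hι.1, (range ι).mkQ_surjective,
    by rw [LinearMap.exact_iff, Submodule.ker_mkQ], hι.2⟩ LinearMap.id

lemma IsSPureInjective.of_forall_isSPureMono
    (h : ∀ ⦃P : Type u⦄ [AddCommGroup P] [Module R P] (i : E →ₗ[R] P), IsSPureMono S i →
      ∃ r : P →ₗ[R] E, r ∘ₗ i = LinearMap.id) :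
    IsSPureInjective S E := by
  intro A B C _ _ _ _ _ _ f g hfg φ
  obtain ⟨P, _, _, i, j, hi, hji⟩ := hfg.exists_pushout φ
  obtain ⟨r, hr⟩ := h i hi
  exact ⟨r ∘ₗ j, by
    rw [LinearMap.comp_assoc, hji, ← LinearMap.comp_assoc, hr, LinearMap.id_comp]⟩

lemma IsSPureEssentialExtension.surjective_of_comp_eq_id {ι : E →ₗ[R] L}
    (hess : IsSPureEssentialExtension S (range ι)) {π : L →ₗ[R] E}
    (hπ : π ∘ₗ ι = LinearMap.id) : Surjective ι := by
  have hπι : ∀ e, π (ι e) = e := LinearMap.congr_fun hπ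
  have hmono : IsSPureMono S (π ∘ₗ (range ι).subtype) := by
    refine ⟨?_, ?_⟩
    · rintro ⟨_, e, rfl⟩ ⟨_, e', rfl⟩ h
      simp only [LinearMap.comp_apply, Submodule.subtype_apply, hπι] at h
      rw [h]
    · rw [range_eq_top.2 fun e ↦ ⟨⟨ι e, e, rfl⟩, hπι e⟩]
      exact isSPureSubmodule_top
  exact fun x ↦ ⟨π x, hess.2 π hmono (hπι (π x))⟩

end Retraction

section DirectedSup
variable [Ring R] {P U : Type u} [AddCommGroup P] [Module R P] [AddCommGroup U] [Module R U]

lemma Submodule.exists_factor_of_isLUB [Module.FinitePresentation R U] {D : Set (Submodule R P)}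
    (hne : D.Nonempty) (hD : DirectedOn (· ≤ ·) D) {X : Submodule R P} (hX : IsLUB D X)
    (u : U →ₗ[R] P ⧸ X) :
    ∃ Z, ∃ hZ : Z ∈ D, ∃ u' : U →ₗ[R] P ⧸ Z, factor (hX.1 hZ) ∘ₗ u' = u := by
  obtain ⟨n, K, e, hK⟩ := Module.FinitePresentation.exists_fin R U
  obtain ⟨ψ, hψ⟩ := Module.projective_lifting_property X.mkQ
    (u ∘ₗ e.symm.toLinearMap ∘ₗ K.mkQ) X.mkQ_surjective
  have hψK : K.map ψ ≤ X := by
    rintro _ ⟨k, hk, rfl⟩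
    rw [← Quotient.mk_eq_zero, ← mkQ_apply, ← LinearMap.comp_apply, hψ]
    simp [(Quotient.mk_eq_zero K).2 hk]
  obtain ⟨Z, hZ, hKZ⟩ := (fg_iff_compact _).1 (hK.map ψ) D X hne hD hX hψK
  refine ⟨Z, hZ, K.mapQ Z ψ (map_le_iff_le_comap.1 hKZ) ∘ₗ e.toLinearMap, ?_⟩
  ext x
  obtain ⟨y, rfl⟩ := e.symm.surjective.comp K.mkQ_surjective x
  simpa using LinearMap.congr_fun hψ y

end DirectedSup

section Zorn
variable [Ring R] {S : Set (ModuleCat.{u} R)} {P : Type u} [AddCommGroup P] [Module R P]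
  {K : Submodule R P}

lemma Submodule.ker_factor_sup (X K : Submodule R P) :
    ker (Submodule.factor (le_sup_left : X ≤ X ⊔ K)) = K.map X.mkQ := by
  rw [Submodule.ker_mapQ, Submodule.comap_id, Submodule.map_sup, Submodule.mkQ_map_self,
    bot_sup_eq]

lemma isSPureSubmodule_map_mkQ_iff_s14 {X : Submodule R P} :
    IsSPureSubmodule S (K.map X.mkQ) ↔
      SPureLift S (Submodule.factor (le_sup_left : X ≤ X ⊔ K)) := by
  rw [← Submodule.ker_factor_sup, isSPureSubmodule_ker_iff (Submodule.factor_surjective _)]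

lemma isSPureSubmodule_map_mkQ_sSup (hfp : ∀ U ∈ S, Module.FinitePresentation R U)
    {c : Set (Submodule R P)} (hne : c.Nonempty) (hc : DirectedOn (· ≤ ·) c)
    (h : ∀ Y ∈ c, IsSPureSubmodule S (K.map Y.mkQ)) :
    IsSPureSubmodule S (K.map (sSup c).mkQ) := by
  rw [isSPureSubmodule_map_mkQ_iff_s14]
  intro U hU u
  have := hfp U hU
  have hdir : DirectedOn (· ≤ ·) ((· ⊔ K) '' c) :=
    directedOn_image.2 (hc.mono fun _ _ h ↦ sup_le_sup_right h K)
  have hlub : IsLUB ((· ⊔ K) '' c) (sSup c ⊔ K) := by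
    convert isLUB_sSup ((· ⊔ K) '' c) using 1
    rw [sSup_image, sSup_eq_iSup, biSup_sup hne]
  obtain ⟨_, ⟨Y, hY, rfl⟩, u', hu'⟩ := Submodule.exists_factor_of_isLUB (hne.image _) hdir hlub u
  obtain ⟨v, hv⟩ := isSPureSubmodule_map_mkQ_iff_s14.1 (h Y hY) U hU u'
  refine ⟨Submodule.factor (le_sSup hY) ∘ₗ v, ?_⟩
  rw [← hu', ← hv]
  simp only [← LinearMap.comp_assoc, Submodule.factor_comp]

lemma isSPureEssentialExtension_of_maximal {X : Submodule R P}
    (hX : Maximal (fun X ↦ Disjoint X K ∧ IsSPureSubmodule S (K.map X.mkQ)) X) :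
    IsSPureEssentialExtension S (K.map X.mkQ) := by
  refine ⟨hX.1.2, fun L _ _ φ hφ ↦ ?_⟩
  set X' := ker (φ ∘ₗ X.mkQ)
  have hXX' : X ≤ X' := fun x hx ↦ by simp [X', (Submodule.Quotient.mk_eq_zero X).2 hx]
  have hdisj : Disjoint X' K := by
    refine Submodule.disjoint_def.2 fun k hk hkK ↦ Submodule.disjoint_def.1 hX.1.1 k ?_ hkK
    have := hφ.1 (a₁ := ⟨X.mkQ k, k, hkK, rfl⟩) (a₂ := 0) (by simpa [X'] using hk)
    exact (Submodule.Quotient.mk_eq_zero X).1 (congrArg Subtype.val this)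
  have hpure : IsSPureSubmodule S (K.map X'.mkQ) := by
    refine IsSPureSubmodule.of_map (ψ := X'.liftQ (φ ∘ₗ X.mkQ) le_rfl)
      (ker_eq_bot.1 (Submodule.ker_liftQ_eq_bot' _ _ rfl)) ?_
    convert hφ.2 using 1
    rw [← Submodule.map_comp, Submodule.liftQ_mkQ, range_comp, Submodule.range_subtype,
      ← Submodule.map_comp]
  have hX'X : X' ≤ X := hX.2 ⟨hdisj, hpure⟩ hXX'
  rw [← ker_eq_bot, eq_bot_iff]
  intro y hy
  obtain ⟨p, rfl⟩ := X.mkQ_surjective y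
  exact (Submodule.Quotient.mk_eq_zero X).2 (hX'X hy)

lemma IsSPureSubmodule.exists_isSPureEssentialExtension_map_mkQ
    (hfp : ∀ U ∈ S, Module.FinitePresentation R U) (hK : IsSPureSubmodule S K) :
    ∃ X : Submodule R P, Disjoint X K ∧ IsSPureEssentialExtension S (K.map X.mkQ) := by
  have hbot : IsSPureSubmodule S (K.map (⊥ : Submodule R P).mkQ) := by
    rw [isSPureSubmodule_map_mkQ_iff_s14]
    refine SPureLift.of_comp_s14 (f := (⊥ : Submodule R P).mkQ) ?_
    rw [Submodule.factor_comp_mk, bot_sup_eq]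
    exact hK
  obtain ⟨X, -, hX⟩ := zorn_le_nonempty₀ {X | Disjoint X K ∧ IsSPureSubmodule S (K.map X.mkQ)}
    (fun c hcS hc Y hY ↦ ⟨sSup c,
      ⟨hc.directedOn.disjoint_sSup_left.2 fun Z hZ ↦ (hcS hZ).1,
        isSPureSubmodule_map_mkQ_sSup hfp ⟨Y, hY⟩ hc.directedOn fun Z hZ ↦ (hcS hZ).2⟩,
      fun _ ↦ le_sSup⟩) ⊥ ⟨disjoint_bot_left, hbot⟩
  exact ⟨X, hX.1.1, isSPureEssentialExtension_of_maximal hX⟩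

end Zorn

lemma IsSPureMono.exists_comp_eq_id_of_forall_surjective [Ring R] {S : Set (ModuleCat.{u} R)}
    (hfp : ∀ U ∈ S, Module.FinitePresentation R U) {E P : Type u} [AddCommGroup E] [Module R E]
    [AddCommGroup P] [Module R P]
    (hE : ∀ (L : Type u) [AddCommGroup L] [Module R L] (ι : E →ₗ[R] L),
      Injective ι → IsSPureEssentialExtension S (range ι) → Surjective ι)
    {i : E →ₗ[R] P} (hi : IsSPureMono S i) : ∃ r : P →ₗ[R] E, r ∘ₗ i = LinearMap.id := by
  obtain ⟨X, hX, hess⟩ := hi.2.exists_isSPureEssentialExtension_map_mkQ hfp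
  rw [← range_comp] at hess
  have hinj : Injective (X.mkQ ∘ₗ i) := by
    refine (injective_iff_map_eq_zero _).2 fun x hx ↦ hi.1 ?_
    rw [map_zero]
    exact Submodule.disjoint_def.1 hX _ ((Submodule.Quotient.mk_eq_zero X).1 hx) ⟨x, rfl⟩
  let e := LinearEquiv.ofBijective _ ⟨hinj, hE _ _ hinj hess⟩
  exact ⟨e.symm.toLinearMap ∘ₗ X.mkQ, LinearMap.ext fun x ↦ e.symm_apply_apply x⟩

theorem stmt14_general [Ring R] (S : Set (ModuleCat.{u} R))
    (hfp : ∀ U ∈ S, Module.FinitePresentation R U)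
    (E : Type u) [AddCommGroup E] [Module R E] :
    IsSPureInjective S E ↔
      ∀ (L : Type u) [AddCommGroup L] [Module R L] (ι : E →ₗ[R] L),
        Function.Injective ι → IsSPureEssentialExtension S (LinearMap.range ι) →
        Function.Surjective ι := by
  refine ⟨fun hE L _ _ ι hι hess ↦ ?_, fun hE ↦ ?_⟩
  · obtain ⟨π, hπ⟩ := hE.exists_comp_eq_id ⟨hι, hess.1⟩
    exact hess.surjective_of_comp_eq_id hπ
  · exact IsSPureInjective.of_forall_isSPureMono fun P _ _ i hi ↦
      hi.exists_comp_eq_id_of_forall_surjective hfp hE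

/-- `E` is `S`-pure injective iff `E` has no proper `S`-pure essential
extension. -/
theorem stmt14 [Ring R] (S : Set (ModuleCat.{u} R))
    (hR : ModuleCat.of R R ∈ S) (hfp : ∀ U ∈ S, Module.FinitePresentation R U)
    (E : Type u) [AddCommGroup E] [Module R E] :
    IsSPureInjective S E ↔
      ∀ (L : Type u) [AddCommGroup L] [Module R L] (ι : E →ₗ[R] L),
        Function.Injective ι → IsSPureEssentialExtension S (LinearMap.range ι) →
        Function.Surjective ι :=
  stmt14_general S hfp E
end

section
/- Let S be a set-presentable class of finitely presented left R-modules containing R. If E is a maximal S-pure essential extension of a module M, then E is S-pure injective. -/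
open Function LinearMap

universe u

variable {R : Type u}

section Aux
variable [Ring R] {S : Set (ModuleCat.{u} R)}

/-- Purity can be pulled back along an injective linear map. -/
lemma pure_of_map_pure {X L : Type u} [AddCommGroup X] [Module R X] [AddCommGroup L]
    [Module R L] (θ : X →ₗ[R] L) (hθ : Function.Injective θ) (N : Submodule R X)
    (h : IsSPureSubmodule S (N.map θ)) : IsSPureSubmodule S N := by
  intro U hU u
  have hle : N ≤ LinearMap.ker ((N.map θ).mkQ ∘ₗ θ) := by
    intro x hx
    simp only [LinearMap.mem_ker, LinearMap.comp_apply, Submodule.mkQ_apply,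
      Submodule.Quotient.mk_eq_zero]
    exact Submodule.mem_map_of_mem hx
  set θb : (X ⧸ N) →ₗ[R] L ⧸ N.map θ := N.liftQ ((N.map θ).mkQ ∘ₗ θ) hle with hθbdef
  have hθbmk : ∀ x : X, θb (N.mkQ x) = (N.map θ).mkQ (θ x) := fun x => rfl
  have hθbinj : Function.Injective θb := by
    rw [← LinearMap.ker_eq_bot, eq_bot_iff]
    intro z hz
    obtain ⟨x, rfl⟩ := N.mkQ_surjective z
    have hz' : (N.map θ).mkQ (θ x) = 0 := by rw [← hθbmk]; exact hz
    have hmemθ : θ x ∈ N.map θ := by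
      rwa [Submodule.mkQ_apply, Submodule.Quotient.mk_eq_zero] at hz'
    obtain ⟨n, hn, hnx⟩ := Submodule.mem_map.mp hmemθ
    have hxn : x = n := hθ hnx.symm
    subst hxn
    simpa [Submodule.Quotient.mk_eq_zero] using hn
  obtain ⟨v, hv⟩ := h U hU (θb ∘ₗ u)
  have hrange : ∀ y, v y ∈ LinearMap.range θ := by
    intro y
    obtain ⟨x, hx⟩ := N.mkQ_surjective (u y)
    have h1 : (N.map θ).mkQ (v y) = θb (u y) := LinearMap.congr_fun hv y
    rw [← hx, hθbmk] at h1
    have : v y - θ x ∈ N.map θ := by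
      rwa [← Submodule.Quotient.mk_eq_zero, Submodule.Quotient.mk_sub, sub_eq_zero,
        ← Submodule.mkQ_apply, ← Submodule.mkQ_apply]
    obtain ⟨n, hn, hnx⟩ := Submodule.mem_map.mp this
    exact ⟨x + n, by rw [map_add, hnx]; abel⟩
  set e := LinearEquiv.ofInjective θ hθ with he
  set w : U →ₗ[R] X :=
    e.symm.toLinearMap ∘ₗ LinearMap.codRestrict (LinearMap.range θ) v hrange with hwdef
  refine ⟨w, ?_⟩
  have key : ∀ y, θ (w y) = v y := by
    intro y
    have h2 : (e (e.symm ⟨v y, hrange y⟩) : L) = v y := by rw [e.apply_symm_apply]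
    simpa [hwdef, he, LinearEquiv.ofInjective_apply] using h2
  ext y
  apply hθbinj
  show θb (N.mkQ (w y)) = θb (u y)
  rw [hθbmk, key]
  exact LinearMap.congr_fun hv y

/-- The composition of `S`-pure monomorphisms is an `S`-pure monomorphism. -/
lemma comp_pureMono {X Y Z : Type u} [AddCommGroup X] [Module R X] [AddCommGroup Y] [Module R Y]
    [AddCommGroup Z] [Module R Z] {f : X →ₗ[R] Y} {g : Y →ₗ[R] Z}
    (hf : IsSPureMono S f) (hg : IsSPureMono S g) : IsSPureMono S (g ∘ₗ f) := by
  refine ⟨hg.1.comp hf.1, ?_⟩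
  intro U hU u
  have hAB : LinearMap.range (g ∘ₗ f) ≤ LinearMap.range g := by
    rintro _ ⟨x, rfl⟩; exact ⟨f x, rfl⟩
  set πB : (Z ⧸ LinearMap.range (g ∘ₗ f)) →ₗ[R] Z ⧸ LinearMap.range g :=
    (LinearMap.range (g ∘ₗ f)).liftQ (LinearMap.range g).mkQ
      (by rwa [Submodule.ker_mkQ]) with hπB
  have hπBmk : ∀ z, πB ((LinearMap.range (g ∘ₗ f)).mkQ z) = (LinearMap.range g).mkQ z :=
    fun z => rfl
  obtain ⟨v, hv⟩ := hg.2 U hU (πB ∘ₗ u)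
  have hmem : ∀ y, u y - (LinearMap.range (g ∘ₗ f)).mkQ (v y) ∈
      (LinearMap.range g).map (LinearMap.range (g ∘ₗ f)).mkQ := by
    intro y
    obtain ⟨z, hz⟩ := (LinearMap.range (g ∘ₗ f)).mkQ_surjective (u y)
    have h1 : (LinearMap.range g).mkQ (v y) = πB (u y) := LinearMap.congr_fun hv y
    rw [← hz, hπBmk] at h1
    have h2 : z - v y ∈ LinearMap.range g := by
      rwa [← Submodule.Quotient.mk_eq_zero, Submodule.Quotient.mk_sub, sub_eq_zero,
        ← Submodule.mkQ_apply, ← Submodule.mkQ_apply, eq_comm]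
    refine ⟨z - v y, h2, ?_⟩
    rw [map_sub, ← hz]
  set gb : (Y ⧸ LinearMap.range f) →ₗ[R] Z ⧸ LinearMap.range (g ∘ₗ f) :=
    (LinearMap.range f).liftQ ((LinearMap.range (g ∘ₗ f)).mkQ ∘ₗ g) (by
      rintro _ ⟨x, rfl⟩
      simp only [LinearMap.mem_ker, LinearMap.comp_apply, Submodule.mkQ_apply,
        Submodule.Quotient.mk_eq_zero]
      exact ⟨x, rfl⟩) with hgb
  have hgbmk : ∀ y, gb ((LinearMap.range f).mkQ y) = (LinearMap.range (g ∘ₗ f)).mkQ (g y) :=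
    fun y => rfl
  have hgbinj : Function.Injective gb := by
    rw [← LinearMap.ker_eq_bot, eq_bot_iff]
    intro z hz
    obtain ⟨y, rfl⟩ := (LinearMap.range f).mkQ_surjective z
    have hz' : (LinearMap.range (g ∘ₗ f)).mkQ (g y) = 0 := by rw [← hgbmk]; exact hz
    have hmemA : g y ∈ LinearMap.range (g ∘ₗ f) := by
      rwa [Submodule.mkQ_apply, Submodule.Quotient.mk_eq_zero] at hz'
    obtain ⟨x, hx⟩ := hmemA
    have : y = f x := hg.1 (by simpa using hx.symm)
    simp [Submodule.Quotient.mk_eq_zero, this]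
  have hgbrange : ∀ w ∈ (LinearMap.range g).map (LinearMap.range (g ∘ₗ f)).mkQ,
      w ∈ LinearMap.range gb := by
    rintro _ ⟨_, ⟨y, rfl⟩, rfl⟩
    exact ⟨(LinearMap.range f).mkQ y, rfl⟩
  set u2 : U →ₗ[R] (Y ⧸ LinearMap.range f) :=
    (LinearEquiv.ofInjective gb hgbinj).symm.toLinearMap ∘ₗ
      LinearMap.codRestrict (LinearMap.range gb)
        (u - (LinearMap.range (g ∘ₗ f)).mkQ ∘ₗ v)
        (fun y => hgbrange _ (hmem y)) with hu2
  have hu2key : ∀ y, gb (u2 y) = u y - (LinearMap.range (g ∘ₗ f)).mkQ (v y) := by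
    intro y
    set e := LinearEquiv.ofInjective gb hgbinj
    have h2 : (e (e.symm ⟨(u - (LinearMap.range (g ∘ₗ f)).mkQ ∘ₗ v) y,
        hgbrange _ (hmem y)⟩) : Z ⧸ LinearMap.range (g ∘ₗ f)) =
        (u - (LinearMap.range (g ∘ₗ f)).mkQ ∘ₗ v) y := by
      rw [e.apply_symm_apply]
    simpa [hu2, e, LinearEquiv.ofInjective_apply] using h2
  obtain ⟨w, hw⟩ := hf.2 U hU u2
  refine ⟨v + g ∘ₗ w, ?_⟩
  ext y
  have h3 : (LinearMap.range f).mkQ (w y) = u2 y := LinearMap.congr_fun hw y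
  have h4 : (LinearMap.range (g ∘ₗ f)).mkQ (g (w y)) = gb (u2 y) := by rw [← h3, hgbmk]
  simp only [LinearMap.comp_apply, LinearMap.add_apply, map_add, h4, hu2key]
  abel

end Aux
section Chain
variable [Ring R] {S : Set (ModuleCat.{u} R)}

lemma ker_double_mkQ {B : Type u} [AddCommGroup B] [Module R B] (A Q : Submodule R B) :
    LinearMap.ker ((A.map Q.mkQ).mkQ ∘ₗ Q.mkQ) = Q ⊔ A := by
  rw [LinearMap.ker_comp, Submodule.ker_mkQ, Submodule.comap_map_mkQ]

/-- Purity of the image of a fixed submodule passes to directed unions of quotients. -/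
lemma pure_iSup (hfp : ∀ U ∈ S, Module.FinitePresentation R U)
    {B : Type u} [AddCommGroup B] [Module R B] (A : Submodule R B)
    {η : Type*} [Nonempty η] (Qf : η → Submodule R B) (hdir : Directed (· ≤ ·) Qf)
    (hp : ∀ i, IsSPureSubmodule S (A.map (Qf i).mkQ)) :
    IsSPureSubmodule S (A.map (⨆ i, Qf i).mkQ) := by
  classical
  set Qs := ⨆ i, Qf i with hQs
  intro U hU u
  haveI : Module.FinitePresentation R ↥U := hfp U hU
  obtain ⟨s, hs, hkfg⟩ := ‹Module.FinitePresentation R ↥U›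
  set p : (↥s →₀ R) →ₗ[R] ↥U := Finsupp.linearCombination R ((↑) : ↥s → ↥U) with hpdef
  have hpsurj : Function.Surjective p := by
    rw [← LinearMap.range_eq_top, hpdef, Finsupp.range_linearCombination,
      Subtype.range_coe_subtype]
    rw [Finset.setOf_mem]
    exact hs
  set qs : B →ₗ[R] (B ⧸ Qs) ⧸ (A.map Qs.mkQ) := (A.map Qs.mkQ).mkQ ∘ₗ Qs.mkQ with hqs
  have hqssurj : Function.Surjective qs :=
    (A.map Qs.mkQ).mkQ_surjective.comp Qs.mkQ_surjective
  obtain ⟨v, hv⟩ := Module.projective_lifting_property qs (u ∘ₗ p) hqssurj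
  obtain ⟨T, hT⟩ := hkfg
  have hTmem : ∀ t ∈ T, v t ∈ ⨆ i, (Qf i ⊔ A) := by
    intro t ht
    have htk : p t = 0 := by
      have : t ∈ LinearMap.ker p := hT ▸ Submodule.subset_span ht
      simpa using this
    have : qs (v t) = 0 := by
      have := LinearMap.congr_fun hv t
      simp only [LinearMap.comp_apply] at this
      rw [this, htk, map_zero]
    have hker : v t ∈ Qs ⊔ A := by
      rw [← ker_double_mkQ A Qs]; exact this
    rw [hQs, iSup_sup] at hker
    exact hker
  have hdir2 : Directed (· ≤ ·) (fun i => Qf i ⊔ A) := by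
    intro i j
    obtain ⟨k, hi, hj⟩ := hdir i j
    exact ⟨k, sup_le_sup_right hi A, sup_le_sup_right hj A⟩
  have hex : ∀ T' : Finset (↥s →₀ R), (∀ t ∈ T', v t ∈ ⨆ i, (Qf i ⊔ A)) →
      ∃ i₀, ∀ t ∈ T', v t ∈ Qf i₀ ⊔ A := by
    intro T'
    induction T' using Finset.induction_on with
    | empty => exact fun _ => ⟨Classical.arbitrary η, by simp⟩
    | @insert a T'' ha ih =>
      intro hmemall
      obtain ⟨i₁, hi₁⟩ := ih (fun t ht => hmemall t (Finset.mem_insert_of_mem ht))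
      have hmem := hmemall a (Finset.mem_insert_self a T'')
      obtain ⟨i₂, hi₂⟩ := (Submodule.mem_iSup_of_directed _ hdir2).mp hmem
      obtain ⟨i₀, h₂, h₁⟩ := hdir2 i₂ i₁
      refine ⟨i₀, fun t ht => ?_⟩
      rcases Finset.mem_insert.mp ht with rfl | ht
      · exact h₂ hi₂
      · exact h₁ (hi₁ t ht)
  obtain ⟨i₀, hi₀⟩ := hex T hTmem
  set q0 : B →ₗ[R] (B ⧸ Qf i₀) ⧸ (A.map (Qf i₀).mkQ) :=
    (A.map (Qf i₀).mkQ).mkQ ∘ₗ (Qf i₀).mkQ with hq0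
  have hT' : Submodule.span R (T : Set _) = LinearMap.ker p := hT
  have hkerle : LinearMap.ker p ≤ LinearMap.ker (q0 ∘ₗ v) := by
    rw [← hT', Submodule.span_le]
    intro t ht
    simp only [SetLike.mem_coe, LinearMap.mem_ker, LinearMap.comp_apply]
    have : v t ∈ LinearMap.ker q0 := by rw [hq0, ker_double_mkQ]; exact hi₀ t ht
    simpa using this
  set e := p.quotKerEquivOfSurjective hpsurj with he
  have hemk : ∀ x, e (Submodule.Quotient.mk x) = p x := by
    intro x
    simp [he, LinearMap.quotKerEquivOfSurjective, LinearEquiv.ofTop_apply]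
  set ub : ↥U →ₗ[R] (B ⧸ Qf i₀) ⧸ (A.map (Qf i₀).mkQ) :=
    ((LinearMap.ker p).liftQ (q0 ∘ₗ v) hkerle) ∘ₗ e.symm.toLinearMap with hub
  have hubp : ∀ x, ub (p x) = q0 (v x) := by
    intro x
    have hsymm : e.symm (p x) = Submodule.Quotient.mk x := by
      rw [LinearEquiv.symm_apply_eq, hemk]
    simp only [hub, LinearMap.comp_apply, LinearEquiv.coe_coe, hsymm]
    rfl
  obtain ⟨w, hw⟩ := hp i₀ U hU ub
  set ρ : (B ⧸ Qf i₀) →ₗ[R] B ⧸ Qs :=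
    (Qf i₀).liftQ Qs.mkQ (by rw [Submodule.ker_mkQ]; exact le_iSup Qf i₀) with hρ
  have hρmk : ∀ b, ρ ((Qf i₀).mkQ b) = Qs.mkQ b := fun b => rfl
  have hσle : A.map (Qf i₀).mkQ ≤
      LinearMap.ker ((A.map Qs.mkQ).mkQ ∘ₗ ρ) := by
    rintro _ ⟨a, haA, rfl⟩
    simp only [LinearMap.mem_ker, LinearMap.comp_apply, hρmk, Submodule.mkQ_apply,
      Submodule.Quotient.mk_eq_zero]
    exact ⟨a, haA, rfl⟩
  set σ := (A.map (Qf i₀).mkQ).liftQ ((A.map Qs.mkQ).mkQ ∘ₗ ρ) hσle with hσ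
  have hσmk : ∀ z, σ ((A.map (Qf i₀).mkQ).mkQ z) = (A.map Qs.mkQ).mkQ (ρ z) := fun z => rfl
  refine ⟨ρ ∘ₗ w, ?_⟩
  rw [← LinearMap.cancel_right hpsurj]
  refine LinearMap.ext fun x => ?_
  simp only [LinearMap.comp_apply]
  have h1 : (A.map Qs.mkQ).mkQ (ρ (w (p x))) = σ (ub (p x)) := by
    rw [← hσmk, ← LinearMap.congr_fun hw (p x)]
    rfl
  rw [h1, hubp]
  have h2 : σ (q0 (v x)) = qs (v x) := by
    simp only [hq0, hqs, LinearMap.comp_apply, hσmk, hρmk]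
  rw [h2]
  exact LinearMap.congr_fun hv x

end Chain
section Retract
variable [Ring R] {S : Set (ModuleCat.{u} R)}

/-- A maximal `S`-pure essential extension admits a retraction onto any `S`-pure embedding. -/
lemma retract_of_max (hfp : ∀ U ∈ S, Module.FinitePresentation R U)
    {E : Type u} [AddCommGroup E] [Module R E] (M : Submodule R E)
    (hmax : IsMaxSPureEssentialExtension S M)
    {P : Type u} [AddCommGroup P] [Module R P] (ι : E →ₗ[R] P)
    (hι : IsSPureMono S ι) : ∃ r : P →ₗ[R] E, r ∘ₗ ι = LinearMap.id := by
  classical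
  set A := LinearMap.range (ι ∘ₗ M.subtype) with hA
  have hMpure : IsSPureMono S (M.subtype) := by
    refine ⟨M.injective_subtype, ?_⟩
    rw [Submodule.range_subtype]
    exact hmax.1.1
  have hApure : IsSPureSubmodule S A := (comp_pureMono hMpure hι).2
  set 𝒞 : Set (Submodule R P) :=
    {Q | Q ⊓ LinearMap.range ι = ⊥ ∧ IsSPureSubmodule S (A.map Q.mkQ)} with h𝒞
  have hbot : (⊥ : Submodule R P) ∈ 𝒞 := by
    constructor
    · exact bot_inf_eq _
    · set θ : (P ⧸ (⊥ : Submodule R P)) →ₗ[R] P :=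
        (⊥ : Submodule R P).liftQ LinearMap.id bot_le with hθ
      have hθmk : ∀ x, θ ((⊥ : Submodule R P).mkQ x) = x := fun x => rfl
      have hθinj : Function.Injective θ := by
        rw [← LinearMap.ker_eq_bot, hθ, Submodule.ker_liftQ]
        simp
      refine pure_of_map_pure θ hθinj _ ?_
      have : (A.map (⊥ : Submodule R P).mkQ).map θ = A := by
        rw [← Submodule.map_comp]
        have : θ ∘ₗ (⊥ : Submodule R P).mkQ = LinearMap.id := rfl
        rw [this, Submodule.map_id]
      rw [this]
      exact hApure
  have hchainub : ∀ c ⊆ 𝒞, IsChain (· ≤ ·) c → ∀ y ∈ c,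
      ∃ ub ∈ 𝒞, ∀ z ∈ c, z ≤ ub := by
    intro c hc hchain y hy
    haveI : Nonempty c := ⟨⟨y, hy⟩⟩
    have hdir : Directed (· ≤ ·) (fun i : c => (i : Submodule R P)) :=
      hchain.directedOn.directed_val
    refine ⟨⨆ i : c, (i : Submodule R P), ⟨?_, ?_⟩, fun z hz => le_iSup
      (fun i : c => (i : Submodule R P)) ⟨z, hz⟩⟩
    · rw [eq_bot_iff]
      rintro x ⟨hx1, hx2⟩
      obtain ⟨i, hxi⟩ := (Submodule.mem_iSup_of_directed _ hdir).mp hx1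
      have := (hc i.2).1
      rw [← this]
      exact ⟨hxi, hx2⟩
    · exact pure_iSup hfp A _ hdir (fun i => (hc i.2).2)
  obtain ⟨Q, -, hQmem, hQmax⟩ :
      ∃ Q, (⊥ : Submodule R P) ≤ Q ∧ Q ∈ 𝒞 ∧ ∀ Q' ∈ 𝒞, Q ≤ Q' → Q' ≤ Q := by
    obtain ⟨Q, hle, hm⟩ := zorn_le_nonempty₀ 𝒞 hchainub ⊥ hbot
    exact ⟨Q, hle, hm.1, fun Q' h1 h2 => hm.2 h1 h2⟩
  set π := Q.mkQ with hπ
  set j : E →ₗ[R] P ⧸ Q := π ∘ₗ ι with hj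
  have hjinj : Function.Injective j := by
    rw [← LinearMap.ker_eq_bot, eq_bot_iff]
    intro e he
    have h1 : ι e ∈ Q := by
      have : π (ι e) = 0 := he
      rwa [hπ, Submodule.mkQ_apply, Submodule.Quotient.mk_eq_zero] at this
    have h2 : ι e ∈ Q ⊓ LinearMap.range ι := ⟨h1, ⟨e, rfl⟩⟩
    rw [hQmem.1] at h2
    have : ι e = 0 := h2
    have : e = 0 := hι.1 (by simpa using this)
    simp [this]
  have hNeq : LinearMap.range (j ∘ₗ M.subtype) = A.map π := by
    rw [hj, LinearMap.comp_assoc, LinearMap.range_comp]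
  have hess : IsSPureEssentialExtension S (LinearMap.range (j ∘ₗ M.subtype)) := by
    constructor
    · show IsSPureSubmodule S _
      rw [hNeq]
      exact hQmem.2
    · intro L _ _ φ hφ
      -- step 1 : φ ∘ j is injective by essentiality of M in E
      have hrangeeq : LinearMap.range ((φ ∘ₗ j) ∘ₗ M.subtype) =
          LinearMap.range (φ ∘ₗ (LinearMap.range (j ∘ₗ M.subtype)).subtype) := by
        rw [LinearMap.comp_assoc, LinearMap.range_comp, LinearMap.range_comp,
          Submodule.range_subtype, LinearMap.range_comp, Submodule.range_subtype]
      have hψinj : Function.Injective ((φ ∘ₗ j) ∘ₗ M.subtype) := by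
        intro m m' hmm
        have h1 : j (M.subtype m) ∈ LinearMap.range (j ∘ₗ M.subtype) := ⟨m, rfl⟩
        have h2 : j (M.subtype m') ∈ LinearMap.range (j ∘ₗ M.subtype) := ⟨m', rfl⟩
        have h3 : φ ((LinearMap.range (j ∘ₗ M.subtype)).subtype ⟨j (M.subtype m), h1⟩) =
            φ ((LinearMap.range (j ∘ₗ M.subtype)).subtype ⟨j (M.subtype m'), h2⟩) := hmm
        have h4 := hφ.1 h3
        have h5 : j (M.subtype m) = j (M.subtype m') := congrArg Subtype.val h4
        exact M.injective_subtype (hjinj h5)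
      have hψ : Function.Injective (φ ∘ₗ j) := by
        refine hmax.1.2 (φ ∘ₗ j) ⟨?_, ?_⟩
        · exact hψinj
        · show IsSPureSubmodule S _
          rw [hrangeeq]
          exact hφ.2
      -- step 2 : the preimage of ker φ is in 𝒞
      set Q' := Submodule.comap π (LinearMap.ker φ) with hQ'
      have hQQ' : Q ≤ Q' := by
        intro x hx
        show π x ∈ LinearMap.ker φ
        have : π x = 0 := by rwa [hπ, Submodule.mkQ_apply, Submodule.Quotient.mk_eq_zero]
        rw [this]; exact Submodule.zero_mem _
      have hQ'mem : Q' ∈ 𝒞 := by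
        constructor
        · rw [eq_bot_iff]
          rintro x ⟨hx1, e, rfl⟩
          have h1 : φ (π (ι e)) = 0 := hx1
          have h2 : (φ ∘ₗ j) e = 0 := h1
          have : e = 0 := hψ (by simpa using h2)
          simp [this]
        · have hkerφπ : LinearMap.ker (φ ∘ₗ π) = Q' := by
            rw [LinearMap.ker_comp]
          set θ : (P ⧸ Q') →ₗ[R] L := Q'.liftQ (φ ∘ₗ π) (le_of_eq hkerφπ.symm) with hθ
          have hθmk : ∀ x, θ (Q'.mkQ x) = φ (π x) := fun x => rfl
          have hθinj : Function.Injective θ := by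
            rw [← LinearMap.ker_eq_bot, hθ, Submodule.ker_liftQ, hkerφπ,
              Submodule.mkQ_map_self]
          refine pure_of_map_pure θ hθinj _ ?_
          have heq : (A.map Q'.mkQ).map θ =
              LinearMap.range (φ ∘ₗ (LinearMap.range (j ∘ₗ M.subtype)).subtype) := by
            rw [← Submodule.map_comp]
            have h1 : θ ∘ₗ Q'.mkQ = φ ∘ₗ π := Q'.liftQ_mkQ _ _
            rw [h1, ← hrangeeq, LinearMap.comp_assoc, LinearMap.range_comp, hA,
              LinearMap.range_comp, LinearMap.range_comp]
            simp [hj, Submodule.map_comp]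
          rw [heq]
          exact hφ.2
      have hQ'eq : Q' = Q := le_antisymm (hQmax Q' hQ'mem hQQ') hQQ'
      -- step 3 : conclude φ injective
      rw [← LinearMap.ker_eq_bot, eq_bot_iff]
      intro z hz
      obtain ⟨b, rfl⟩ := Q.mkQ_surjective z
      have hb : b ∈ Q' := hz
      rw [hQ'eq] at hb
      simpa [Submodule.Quotient.mk_eq_zero] using hb
  have hsurj : Function.Surjective j := hmax.2 j hjinj hess
  set e := LinearEquiv.ofBijective j ⟨hjinj, hsurj⟩ with he
  refine ⟨e.symm.toLinearMap ∘ₗ π, ?_⟩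
  ext x
  show e.symm (π (ι x)) = x
  have : π (ι x) = e x := rfl
  rw [this, e.symm_apply_apply]

end Retract
/-- a maximal `S`-pure essential extension is `S`-pure injective. -/
theorem stmt16 [Ring R] (S : Set (ModuleCat.{u} R))
    (hR : ModuleCat.of R R ∈ S) (hfp : ∀ U ∈ S, Module.FinitePresentation R U)
    {E : Type u} [AddCommGroup E] [Module R E] (M : Submodule R E)
    (hmax : IsMaxSPureEssentialExtension S M) :
    IsSPureInjective S E := by
  intro A B C _ _ _ _ _ _ f g hex h
  obtain ⟨hfinj, hgsurj, hexact, hlift⟩ := hex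
  -- pushout of f along h
  set d : A →ₗ[R] B × E := LinearMap.prod f (-h) with hd
  set D := LinearMap.range d with hD
  set ι : E →ₗ[R] (B × E) ⧸ D := D.mkQ ∘ₗ LinearMap.inr R B E with hι
  set β : B →ₗ[R] (B × E) ⧸ D := D.mkQ ∘ₗ LinearMap.inl R B E with hβ
  have hβf : ∀ a : A, β (f a) = ι (h a) := by
    intro a
    have hmem : ((f a, (0 : E)) : B × E) - (0, h a) ∈ D :=
      ⟨a, by simp [hd, Prod.ext_iff]⟩
    have h0 := (Submodule.Quotient.mk_eq_zero D).mpr hmem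
    rw [Submodule.Quotient.mk_sub, sub_eq_zero] at h0
    exact h0
  have hιinj : Function.Injective ι := by
    rw [← LinearMap.ker_eq_bot, eq_bot_iff]
    intro e he
    have he' : (Submodule.Quotient.mk ((0 : B), e) : (B × E) ⧸ D) = 0 := he
    obtain ⟨a, ha⟩ := (Submodule.Quotient.mk_eq_zero D).mp he'
    have ha1 : f a = 0 := congrArg Prod.fst ha
    have ha0 : a = 0 := hfinj (by simpa using ha1)
    have ha2 : -h a = e := congrArg Prod.snd ha
    simp only [LinearMap.mem_ker] at *
    rw [← ha2, ha0]
    simp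
  have hγle : D ≤ LinearMap.ker (g ∘ₗ LinearMap.fst R B E) := by
    rintro _ ⟨a, rfl⟩
    simp [hd, hexact.apply_apply_eq_zero a]
  set γ : ((B × E) ⧸ D) →ₗ[R] C := D.liftQ (g ∘ₗ LinearMap.fst R B E) hγle with hγ
  have hγβ : ∀ b, γ (β b) = g b := fun b => rfl
  have hγι : ∀ e, γ (ι e) = 0 := fun e => by
    show g 0 = 0; simp
  have hkerγ : LinearMap.ker γ = LinearMap.range ι := by
    apply le_antisymm
    · intro z hz
      obtain ⟨⟨b, e⟩, rfl⟩ := D.mkQ_surjective z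
      have hgb : g b = 0 := hz
      obtain ⟨a, ha⟩ := (hexact b).mp hgb
      refine ⟨e + h a, ?_⟩
      have hmem : ((0, e + h a) : B × E) - (b, e) ∈ D := by
        refine ⟨-a, ?_⟩
        simp [hd, Prod.ext_iff, ← ha]
      have := (Submodule.Quotient.mk_eq_zero D).mpr hmem
      rw [Submodule.Quotient.mk_sub, sub_eq_zero] at this
      simpa [hι] using this
    · rintro _ ⟨e, rfl⟩
      simp only [LinearMap.mem_ker]
      exact hγι e
  have hιpure : IsSPureMono S ι := by
    refine ⟨hιinj, ?_⟩
    intro U hU u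
    set γb : (((B × E) ⧸ D) ⧸ LinearMap.range ι) →ₗ[R] C :=
      (LinearMap.range ι).liftQ γ (by rw [hkerγ]) with hγb
    have hγbmk : ∀ z, γb ((LinearMap.range ι).mkQ z) = γ z := fun z => rfl
    have hγbinj : Function.Injective γb := by
      rw [← LinearMap.ker_eq_bot, hγb, Submodule.ker_liftQ, hkerγ, Submodule.mkQ_map_self]
    obtain ⟨h₁, hh₁⟩ := hlift U hU (γb ∘ₗ u)
    refine ⟨β ∘ₗ h₁, ?_⟩
    ext y
    apply hγbinj
    show γb ((LinearMap.range ι).mkQ (β (h₁ y))) = γb (u y)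
    rw [hγbmk, hγβ]
    exact LinearMap.congr_fun hh₁ y
  obtain ⟨r, hr⟩ := retract_of_max hfp M hmax ι hιpure
  refine ⟨r ∘ₗ β, ?_⟩
  ext a
  show r (β (f a)) = h a
  rw [hβf a]
  exact LinearMap.congr_fun hr (h a)
end
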